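/- arXiv:2207.04495 — 2 statements merged into one kernel-verified Lean document; each statement's English description precedes it below -/
import Mathlib

section
/- Let H ⊆ D_{2n} be the cyclic subgroup of order n generated by diag(ω, ω^{-1}). Then ℂ[V²]^H is a free module over P(n,2) := ℂ[p_{n,0}, q_{2,0}, p_{0,n}, q_{0,2}], with basis the 4n monomials (x_1y_2)^j and (x_2y_1)^j for j = 0, 1, …, n−1 (the two elements for j = 0 both equal 1 and are counted once), x_1^{n−i}x_2^i and y_1^{n−i}y_2^i for i = 1, …, n−1, together with x_1^n, x_2^n, and x_1^n x_2^n. -/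
open MvPolynomial

noncomputable section

/-- `ℂ[V^m]` for `V = ℂ²`: variable `(0, i)` is `xᵢ`, variable `(1, i)` is `yᵢ`. -/
abbrev PolyVm (m : ℕ) : Type := MvPolynomial (Fin 2 × Fin m) ℂ

/-- A `Finsupp` on `Fin m` built from a tuple. -/
def fsOf {m : ℕ} (v : Fin m → ℕ) : Fin m →₀ ℕ := Finsupp.equivFunOnFinite.symm v

@[simp] lemma fsOf_apply {m : ℕ} (v : Fin m → ℕ) (i : Fin m) : fsOf v i = v i := rfl

lemma fsOf_sum2 (a b : ℕ) : ∑ i, fsOf ![a, b] i = a + b := by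
  simp [Fin.sum_univ_two]

lemma fsOf_sum3 (a b c : ℕ) : ∑ i, fsOf ![a, b, c] i = a + b + c := by
  simp [Fin.sum_univ_three]

/-- The polarization `p_β = x^β + y^β` of `p = xⁿ + yⁿ`. -/
def pPoly {m : ℕ} (β : Fin m →₀ ℕ) : PolyVm m :=
  (∏ i, X (0, i) ^ β i) + (∏ i, X (1, i) ^ β i)

/-- The polarization `q_α` of `q = xy` : `q_{2eᵢ} = xᵢyᵢ` and
`q_{eᵢ+eⱼ} = (xᵢyⱼ + xⱼyᵢ)/2` for `i ≠ j`. -/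
def qPoly {m : ℕ} (α : Fin m →₀ ℕ) : PolyVm m :=
  ((((Finset.univ.filter fun ij : Fin m × Fin m =>
      Finsupp.single ij.1 1 + Finsupp.single ij.2 1 = α).card : ℕ) : ℂ))⁻¹ •
  ∑ ij ∈ Finset.univ.filter (fun ij : Fin m × Fin m =>
      Finsupp.single ij.1 1 + Finsupp.single ij.2 1 = α),
    X (0, ij.1) * X (1, ij.2)

/-- Variables of the free symmetric algebra `F(n,m)`: `ρ_α` for `|α| = 2`
(left summand) and `π_β` for `|β| = n` (right summand). -/
abbrev FVar (n m : ℕ) : Type :=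
  {d : Fin m →₀ ℕ // ∑ i, d i = 2} ⊕ {d : Fin m →₀ ℕ // ∑ i, d i = n}

/-- The polynomial algebra `F(n,m) = ℂ[ρ_α, π_β]`. -/
abbrev FAlg (n m : ℕ) : Type := MvPolynomial (FVar n m) ℂ

/-- The canonical surjection `φ(n,m) : F(n,m) → ℂ[V^m]^{D_{2n}} ⊆ ℂ[V^m]`,
`ρ_α ↦ q_α`, `π_β ↦ p_β`. -/
def phi (n m : ℕ) : FAlg n m →ₐ[ℂ] PolyVm m :=
  aeval (Sum.elim (fun a => qPoly a.1) (fun b => pPoly b.1))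

/-- The weights of the grading of `F(n,m)`: `deg ρ_α = 2`, `deg π_β = n`. -/
def wF (n m : ℕ) : FVar n m → ℕ := Sum.elim (fun _ => 2) (fun _ => n)

/-- The matrix `diag(ω, ω⁻¹)`. -/
def dMat (ω : ℂ) : Matrix (Fin 2) (Fin 2) ℂ := !![ω, 0; 0, ω⁻¹]

/-- The matrix `((0,1),(1,0))`. -/
def sMat : Matrix (Fin 2) (Fin 2) ℂ := !![0, 1; 1, 0]

/-- The action of a `2×2` matrix `g` on `ℂ[V^m]` (diagonal action on the `m`
vector variables): `x_{a,i} ↦ ∑_b g_{a b} x_{b,i}`. -/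
def actG {m : ℕ} (g : Matrix (Fin 2) (Fin 2) ℂ) : PolyVm m →ₐ[ℂ] PolyVm m :=
  aeval fun p => ∑ b : Fin 2, g p.1 b • X (b, p.2)

/-- The subalgebra of `ℂ[V^m]` of polynomials invariant under (the group
generated by) a set `S` of `2×2` matrices. -/
def invAlg (m : ℕ) (S : Set (Matrix (Fin 2) (Fin 2) ℂ)) : Subalgebra ℂ (PolyVm m) where
  carrier := {f | ∀ g ∈ Submonoid.closure S, actG g f = f}
  mul_mem' := fun ha hb => by
    intro g hg
    rw [map_mul, ha g hg, hb g hg]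
  add_mem' := fun ha hb => by
    intro g hg
    rw [map_add, ha g hg, hb g hg]
  algebraMap_mem' := fun c => by
    intro g hg
    exact (actG g).commutes c

/-- The invariant algebra `ℂ[V^m]^{D_{2n}}`, where `D_{2n}` is generated by
`diag(ω, ω⁻¹)` and `((0,1),(1,0))`. -/
def dihedralInv (m : ℕ) (ω : ℂ) : Subalgebra ℂ (PolyVm m) :=
  invAlg m {dMat ω, sMat}


/-- Padding of a multi-index in `ℕ^l` by zeros to a multi-index in `ℕ^m`, `l ≤ m`. -/
def padIdx {l m : ℕ} (h : l ≤ m) (d : Fin l →₀ ℕ) : Fin m →₀ ℕ :=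
  fsOf fun i => if hi : (i : ℕ) < l then d ⟨i, hi⟩ else 0

lemma padIdx_sum {l m : ℕ} (h : l ≤ m) (d : Fin l →₀ ℕ) :
    ∑ i, padIdx h d i = ∑ i, d i := by
  have h1 : ∑ i : Fin m, padIdx h d i
      = ∑ k ∈ Finset.range m, (fun k => if hk : k < l then d ⟨k, hk⟩ else 0) k := by
    simp only [padIdx, fsOf_apply]
    exact Fin.sum_univ_eq_sum_range (fun k => if hk : k < l then d ⟨k, hk⟩ else 0) m
  have h3 : ∑ k ∈ Finset.range l, (fun k => if hk : k < l then d ⟨k, hk⟩ else 0) k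
      = ∑ k ∈ Finset.range m, (fun k => if hk : k < l then d ⟨k, hk⟩ else 0) k := by
    apply Finset.sum_subset (Finset.range_subset_range.2 h)
    intro k _ hk
    have hkl : ¬ k < l := by simpa using hk
    simp [hkl]
  have h2 : ∑ k ∈ Finset.range l, (fun k => if hk : k < l then d ⟨k, hk⟩ else 0) k
      = ∑ i : Fin l, d i := by
    rw [← Fin.sum_univ_eq_sum_range (fun k => if hk : k < l then d ⟨k, hk⟩ else 0) l]
    exact Finset.sum_congr rfl fun i _ => by simp [i.2]
  rw [h1, ← h3, h2]

/-- The embedding `F(n,l) → F(n,m)` on variables, padding multi-indices with zeros. -/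
def padVar (n : ℕ) {l m : ℕ} (h : l ≤ m) : FVar n l → FVar n m :=
  Sum.elim (fun a => Sum.inl ⟨padIdx h a.1, by rw [padIdx_sum h]; exact a.2⟩)
           (fun b => Sum.inr ⟨padIdx h b.1, by rw [padIdx_sum h]; exact b.2⟩)

/-- The embedding `F(n,l) → F(n,m)` (padding multi-indices with zeros). -/
def padF (n : ℕ) {l m : ℕ} (h : l ≤ m) : FAlg n l →ₐ[ℂ] FAlg n m :=
  rename (padVar n h)

/-- Substitution action of an `m×m` matrix on `ℂ[z₁,…,z_m]`: `z_j ↦ ∑_i g_{ij} z_i`. -/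
def aSub {m : ℕ} (g : Matrix (Fin m) (Fin m) ℂ) :
    MvPolynomial (Fin m) ℂ →ₐ[ℂ] MvPolynomial (Fin m) ℂ :=
  aeval fun j => ∑ i, g i j • X i

/-- Rewriting a homogeneous polynomial of degree `2` in `ℂ[z₁,…,z_m]` as a linear
combination of the variables `ρ_γ` of `F(n,m)`. -/
def lift2 (n m : ℕ) (P : MvPolynomial (Fin m) ℂ) : FAlg n m :=
  ∑ d ∈ P.support, if h : (∑ i, d i) = 2 then P.coeff d • X (Sum.inl ⟨d, h⟩) else 0

/-- Rewriting a homogeneous polynomial of degree `n` in `ℂ[z₁,…,z_m]` as a linear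
combination of the variables `π_δ` of `F(n,m)`. -/
def liftn (n m : ℕ) (P : MvPolynomial (Fin m) ℂ) : FAlg n m :=
  ∑ d ∈ P.support, if h : (∑ i, d i) = n then P.coeff d • X (Sum.inr ⟨d, h⟩) else 0

/-- The action of the matrix `g` on `F(n,m)`: under the identifications
`ρ_α ↔ z^α` (`|α| = 2`) and `π_β ↔ z^β` (`|β| = n`) it is the substitution action
`z_j ↦ ∑_i g_{ij} z_i`; equivalently `g·ρ_α = ∑ c_{α,γ}(g) ρ_γ` and
`g·π_β = ∑ d_{β,δ}(g) π_δ` with the coefficients coming from `g·q_α = ∑ c_{α,γ}(g) q_γ`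
and `g·p_β = ∑ d_{β,δ}(g) p_δ`. -/
def glF (n m : ℕ) (g : Matrix (Fin m) (Fin m) ℂ) : FAlg n m →ₐ[ℂ] FAlg n m :=
  aeval (Sum.elim (fun a => lift2 n m (aSub g (monomial a.1 1)))
                  (fun b => liftn n m (aSub g (monomial b.1 1))))

/-- An ideal of `F(n,m)` stable under the action of `GL_m(ℂ)`. -/
def GLStable (n m : ℕ) (I : Ideal (FAlg n m)) : Prop :=
  ∀ g : GL (Fin m) ℂ, ∀ u ∈ I, glF n m (g : Matrix (Fin m) (Fin m) ℂ) u ∈ I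

/-- The smallest `GL_m(ℂ)`-stable ideal of `F(n,m)` containing a set `S`. -/
def glSpan (n m : ℕ) (S : Set (FAlg n m)) : Ideal (FAlg n m) :=
  sInf {I : Ideal (FAlg n m) | S ⊆ ↑I ∧ GLStable n m I}


/-- `p_{a,b} = x₁^a x₂^b + y₁^a y₂^b` in `ℂ[x₁,y₁,x₂,y₂]`. -/
def pp (a b : ℕ) : PolyVm 2 := X (0,0) ^ a * X (0,1) ^ b + X (1,0) ^ a * X (1,1) ^ b

/-- `q_{2,0} = x₁y₁`. -/
def q20 : PolyVm 2 := X (0,0) * X (1,0)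

/-- `q_{0,2} = x₂y₂`. -/
def q02 : PolyVm 2 := X (0,1) * X (1,1)

/-- `q_{1,1} = (x₁y₂ + x₂y₁)/2`. -/
def q11 : PolyVm 2 := C (1/2 : ℂ) * (X (0,0) * X (1,1) + X (0,1) * X (1,0))

/-- The variable `ρ_{(a,b,0,…,0)}` of `F(n,m)`, `m ≥ 2`, `a+b = 2`. -/
def rhoPad2 (n : ℕ) {m : ℕ} (hm : 2 ≤ m) (a b : ℕ) (h : a + b = 2) : FAlg n m :=
  X (Sum.inl ⟨padIdx hm (fsOf ![a, b]), by rw [padIdx_sum, fsOf_sum2]; exact h⟩)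

/-- The variable `π_{(a,b,0,…,0)}` of `F(n,m)`, `m ≥ 2`, `a+b = n`. -/
def piPad2 (n : ℕ) {m : ℕ} (hm : 2 ≤ m) (a b : ℕ) (h : a + b = n) : FAlg n m :=
  X (Sum.inr ⟨padIdx hm (fsOf ![a, b]), by rw [padIdx_sum, fsOf_sum2]; exact h⟩)

/-- The relation `R(n)_{n,2} = π_{n,0}ρ_{0,2} − 2π_{n−1,1}ρ_{1,1} + π_{n−2,2}ρ_{2,0}`,
viewed in `F(n,m)` for any `m ≥ 2`. -/
def Rn2 (n : ℕ) (hn : 3 ≤ n) {m : ℕ} (hm : 2 ≤ m) : FAlg n m :=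
  piPad2 n hm n 0 (by omega) * rhoPad2 n hm 0 2 (by omega)
    - 2 * piPad2 n hm (n-1) 1 (by omega) * rhoPad2 n hm 1 1 (by omega)
    + piPad2 n hm (n-2) 2 (by omega) * rhoPad2 n hm 2 0 (by omega)

/-- The relation `R(n)_{2n−2k,2k}` for `1 ≤ k ≤ ⌊n/2⌋`, viewed in `F(n,m)`, `m ≥ 2`:
`(−1)^k ½ C(2k,k) π_{n−k,k}² + ∑_{j=0}^{k−1} (−1)^j C(2k,j) π_{n−j,j} π_{n−2k+j,2k−j}
  − 4^k ρ_{2,0}^{n−2k} (ρ_{1,1}² − ρ_{2,0}ρ_{0,2})^k`. -/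
def Rnk (n k : ℕ) (hn : 3 ≤ n) (hk1 : 1 ≤ k) (hk2 : k ≤ n / 2) {m : ℕ} (hm : 2 ≤ m) :
    FAlg n m :=
  C ((-1 : ℂ) ^ k * ((2*k).choose k : ℂ) / 2) * piPad2 n hm (n-k) k (by omega) ^ 2
    + ∑ j ∈ (Finset.range k).attach,
        C ((-1 : ℂ) ^ (j : ℕ) * ((2*k).choose (j : ℕ) : ℂ)) *
          (piPad2 n hm (n - (j : ℕ)) (j : ℕ)
              (by have := Finset.mem_range.mp j.2; omega) *
           piPad2 n hm (n - 2*k + (j : ℕ)) (2*k - (j : ℕ))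
              (by have := Finset.mem_range.mp j.2; omega))
    - C ((4 : ℂ) ^ k) * rhoPad2 n hm 2 0 (by omega) ^ (n - 2*k) *
        (rhoPad2 n hm 1 1 (by omega) ^ 2
          - rhoPad2 n hm 2 0 (by omega) * rhoPad2 n hm 0 2 (by omega)) ^ k

/-- The free basis of `ℂ[V²]^H` over `P(n,2)`:
`1`; `(x₁y₂)^j, (x₂y₁)^j` (`1 ≤ j ≤ n−1`); `x₁^{n−i}x₂^i, y₁^{n−i}y₂^i` (`1 ≤ i ≤ n−1`);
`x₁^n, x₂^n, x₁^n x₂^n`  —  in total `4n` monomials. -/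
def cycBasis (n : ℕ) :
    Unit ⊕ (Fin (n-1) ⊕ Fin (n-1)) ⊕ (Fin (n-1) ⊕ Fin (n-1)) ⊕ Fin 3 → PolyVm 2 :=
  Sum.elim (fun _ => (1 : PolyVm 2))
    (Sum.elim
      (Sum.elim (fun j => (X (0,0) * X (1,1) : PolyVm 2) ^ ((j : ℕ) + 1))
                (fun j => (X (0,1) * X (1,0) : PolyVm 2) ^ ((j : ℕ) + 1)))
      (Sum.elim
        (Sum.elim (fun i => (X (0,0) : PolyVm 2) ^ (n - ((i : ℕ) + 1)) * X (0,1) ^ ((i : ℕ) + 1))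
                  (fun i => (X (1,0) : PolyVm 2) ^ (n - ((i : ℕ) + 1)) * X (1,1) ^ ((i : ℕ) + 1)))
        (fun t => ![(X (0,0) : PolyVm 2) ^ n, X (0,1) ^ n, X (0,0) ^ n * X (0,1) ^ n] t)))
-- chunk 1: actG structure, diagonal scaling, invariance characterization
namespace CycAux
open MvPolynomial Finset

/-- generic diagonal scaling endomorphism -/
def dscale (c : Fin 2 × Fin 2 → ℂ) : PolyVm 2 →ₐ[ℂ] PolyVm 2 :=
  aeval (fun v => c v • X v)

@[simp] lemma dscale_X (c : Fin 2 × Fin 2 → ℂ) (v : Fin 2 × Fin 2) :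
    dscale c (X v) = c v • X v := aeval_X _ _

lemma monomial_eq_prod (d : Fin 2 × Fin 2 →₀ ℕ) (r : ℂ) :
    monomial d r = C r * ∏ v : Fin 2 × Fin 2, X v ^ d v := by
  rw [monomial_eq, Finsupp.prod_fintype]
  intro i; simp

lemma dscale_monomial (c : Fin 2 × Fin 2 → ℂ) (d : Fin 2 × Fin 2 →₀ ℕ) (r : ℂ) :
    dscale c (monomial d r) = (∏ v : Fin 2 × Fin 2, c v ^ d v) • monomial d r := by
  rw [monomial_eq_prod, map_mul, map_prod]
  simp only [map_pow, dscale_X, smul_pow, smul_eq_C_mul, mul_pow]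
  rw [Finset.prod_mul_distrib]
  have h2 : (∏ x : Fin 2 × Fin 2, C (c x) ^ d x : PolyVm 2) = C (∏ x : Fin 2 × Fin 2, c x ^ d x) := by
    rw [map_prod (C : ℂ →+* PolyVm 2)]
    simp [C_pow]
  have h3 : dscale c (C r) = C r := by
    simp [dscale, algebraMap_eq]
  rw [h2, h3]
  ring

lemma actG_eq_dscale (ω : ℂ) :
    actG (m := 2) (dMat ω) = dscale (fun v => if v.1 = 0 then ω else ω⁻¹) := by
  apply MvPolynomial.algHom_ext
  intro v
  obtain ⟨a, i⟩ := v
  simp only [actG, aeval_X, dscale_X]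
  fin_cases a <;> simp [dMat, Fin.sum_univ_two, Matrix.cons_val_zero, Matrix.cons_val_one]

end CycAux
namespace CycAux
open MvPolynomial Finset

def xdeg (d : Fin 2 × Fin 2 →₀ ℕ) : ℕ := d (0,0) + d (0,1)
def ydeg (d : Fin 2 × Fin 2 →₀ ℕ) : ℕ := d (1,0) + d (1,1)

lemma prod_scal (ω : ℂ) (d : Fin 2 × Fin 2 →₀ ℕ) :
    (∏ v : Fin 2 × Fin 2, (if v.1 = 0 then ω else ω⁻¹) ^ d v)
      = ω ^ xdeg d * ω⁻¹ ^ ydeg d := by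
  rw [Fintype.prod_prod_type]
  rw [Fin.prod_univ_two]
  rw [Fin.prod_univ_two, Fin.prod_univ_two]
  simp [xdeg, ydeg, pow_add]

lemma actG_dMat_apply (ω : ℂ) (f : PolyVm 2) :
    actG (dMat ω) f
      = ∑ d ∈ f.support, (ω ^ xdeg d * ω⁻¹ ^ ydeg d) • monomial d (coeff d f) := by
  conv_lhs => rw [← f.support_sum_monomial_coeff]
  rw [map_sum]
  rw [actG_eq_dscale]
  simp only [dscale_monomial, prod_scal]

lemma coeff_actG (ω : ℂ) (f : PolyVm 2) (d : Fin 2 × Fin 2 →₀ ℕ) :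
    coeff d (actG (dMat ω) f) = (ω ^ xdeg d * ω⁻¹ ^ ydeg d) * coeff d f := by
  rw [actG_dMat_apply]
  rw [coeff_sum]
  rcases em (d ∈ f.support) with hd | hd
  · rw [Finset.sum_eq_single d]
    · simp [coeff_monomial]
    · intro b _ hb
      simp [coeff_smul, coeff_monomial, hb]
    · intro h; exact absurd hd h
  · rw [Finset.sum_eq_zero]
    · rw [notMem_support_iff.mp hd, mul_zero]
    · intro b hb
      have hbd : b ≠ d := by rintro rfl; exact hd hb
      simp [coeff_smul, coeff_monomial, hbd]

def InvW (ω : ℂ) (f : PolyVm 2) : Prop := ∀ d ∈ f.support, ω ^ xdeg d = ω ^ ydeg d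

lemma actG_fix_iff (ω : ℂ) (hω0 : ω ≠ 0) (f : PolyVm 2) :
    actG (dMat ω) f = f ↔ InvW ω f := by
  constructor
  · intro h d hd
    have hc := congrArg (coeff d) h
    rw [coeff_actG] at hc
    have hcoeff : coeff d f ≠ 0 := mem_support_iff.mp hd
    have hscal : ω ^ xdeg d * ω⁻¹ ^ ydeg d = 1 :=
      mul_right_cancel₀ hcoeff (hc.trans (one_mul _).symm)
    have : ω ^ xdeg d * ω⁻¹ ^ ydeg d * ω ^ ydeg d = ω ^ ydeg d := by rw [hscal, one_mul]
    rw [mul_assoc, ← mul_pow, inv_mul_cancel₀ hω0, one_pow, mul_one] at this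
    exact this
  · intro h
    apply MvPolynomial.ext
    intro d
    rw [coeff_actG]
    rcases em (d ∈ f.support) with hd | hd
    · rw [h d hd, ← mul_pow, mul_inv_cancel₀ hω0, one_pow, one_mul]
    · rw [notMem_support_iff.mp hd, mul_zero]

lemma actG_one_apply (f : PolyVm 2) : actG (1 : Matrix (Fin 2) (Fin 2) ℂ) f = f := by
  have : actG (1 : Matrix (Fin 2) (Fin 2) ℂ) = AlgHom.id ℂ (PolyVm 2) := by
    apply MvPolynomial.algHom_ext
    rintro ⟨a, i⟩
    simp only [actG, aeval_X, AlgHom.coe_id, id_eq]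
    fin_cases a <;> simp [Fin.sum_univ_two, Matrix.one_apply]
  rw [this]; rfl

lemma actG_mul_apply (g h : Matrix (Fin 2) (Fin 2) ℂ) (f : PolyVm 2) :
    actG (g * h) f = actG h (actG g f) := by
  have : actG (m := 2) (g * h) = (actG h).comp (actG g) := by
    apply MvPolynomial.algHom_ext
    rintro ⟨a, i⟩
    simp only [actG, aeval_X, AlgHom.comp_apply]
    fin_cases a <;>
      simp [Fin.sum_univ_two, Matrix.mul_apply, smul_eq_C_mul, map_add, map_mul, aeval_X,
        aeval_C, algebraMap_eq] <;>
      ring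
  rw [this]; rfl

lemma mem_invAlg_iff (ω : ℂ) (f : PolyVm 2) :
    f ∈ invAlg 2 {dMat ω} ↔ actG (dMat ω) f = f := by
  constructor
  · intro h
    exact h (dMat ω) (Submonoid.subset_closure rfl)
  · intro h g hg
    induction hg using Submonoid.closure_induction with
    | mem x hx => rw [Set.mem_singleton_iff] at hx; rw [hx]; exact h
    | one => exact actG_one_apply f
    | mul x y _ _ hx hy => rw [actG_mul_apply, hx, hy]

lemma mem_invAlg_iff_invW (n : ℕ) (hn : 3 ≤ n) (ω : ℂ) (hω : IsPrimitiveRoot ω n)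
    (f : PolyVm 2) : f ∈ invAlg 2 {dMat ω} ↔ InvW ω f := by
  rw [mem_invAlg_iff, actG_fix_iff ω (hω.ne_zero (by omega)) f]

end CycAux
namespace CycAux
open MvPolynomial Finset

def mono (a b c e : ℕ) : PolyVm 2 := X (0,0) ^ a * X (1,0) ^ b * X (0,1) ^ c * X (1,1) ^ e

def mk4 (a b c e : ℕ) : Fin 2 × Fin 2 →₀ ℕ :=
  Finsupp.equivFunOnFinite.symm
    (fun v => if v = ((0 : Fin 2), (0 : Fin 2)) then a else if v = (1,0) then b
      else if v = (0,1) then c else e)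

@[simp] lemma mk4_00 (a b c e : ℕ) : mk4 a b c e (0,0) = a := rfl
@[simp] lemma mk4_10 (a b c e : ℕ) : mk4 a b c e (1,0) = b := rfl
@[simp] lemma mk4_01 (a b c e : ℕ) : mk4 a b c e (0,1) = c := rfl
@[simp] lemma mk4_11 (a b c e : ℕ) : mk4 a b c e (1,1) = e := rfl
@[simp] lemma mk4_z (a b c e : ℕ) : mk4 a b c e 0 = a := rfl
@[simp] lemma mk4_o (a b c e : ℕ) : mk4 a b c e 1 = e := rfl

@[simp] lemma xdeg_mk4 (a b c e : ℕ) : xdeg (mk4 a b c e) = a + c := by simp [xdeg]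
@[simp] lemma ydeg_mk4 (a b c e : ℕ) : ydeg (mk4 a b c e) = b + e := by simp [ydeg]

lemma mono_eq_monomial (a b c e : ℕ) : mono a b c e = monomial (mk4 a b c e) 1 := by
  rw [monomial_eq_prod, map_one, one_mul, Fintype.prod_prod_type, Fin.prod_univ_two,
    Fin.prod_univ_two, Fin.prod_univ_two]
  simp only [mk4_00, mk4_01, mk4_10, mk4_11, mono]
  ring

lemma eq_mk4 (d : Fin 2 × Fin 2 →₀ ℕ) : d = mk4 (d (0,0)) (d (1,0)) (d (0,1)) (d (1,1)) := by
  ext v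
  obtain ⟨x, y⟩ := v
  fin_cases x <;> fin_cases y <;> rfl

lemma monomial_eq_smul_mono (d : Fin 2 × Fin 2 →₀ ℕ) (r : ℂ) :
    monomial d r = r • mono (d (0,0)) (d (1,0)) (d (0,1)) (d (1,1)) := by
  rw [mono_eq_monomial, ← eq_mk4, smul_monomial, smul_eq_mul, mul_one]

lemma invW_add {ω : ℂ} {f g : PolyVm 2} (hf : InvW ω f) (hg : InvW ω g) : InvW ω (f + g) := by
  intro d hd
  rcases Finset.mem_union.mp (MvPolynomial.support_add hd) with h | h
  exacts [hf d h, hg d h]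

lemma invW_mul {ω : ℂ} {f g : PolyVm 2} (hf : InvW ω f) (hg : InvW ω g) : InvW ω (f * g) := by
  intro d hd
  have := MvPolynomial.support_mul f g hd
  rw [Finset.mem_add] at this
  obtain ⟨u, hu, v, hv, rfl⟩ := this
  have hx : xdeg (u + v) = xdeg u + xdeg v := by simp [xdeg, Finsupp.add_apply]; ring
  have hy : ydeg (u + v) = ydeg u + ydeg v := by simp [ydeg, Finsupp.add_apply]; ring
  rw [hx, hy, pow_add, pow_add, hf u hu, hg v hv]

lemma invW_C {ω : ℂ} (r : ℂ) : InvW ω (C r) := by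
  intro d hd
  rw [C_apply] at hd
  have := MvPolynomial.support_monomial_subset hd
  rw [Finset.mem_singleton] at this
  subst this
  simp [xdeg, ydeg]

lemma invW_zero {ω : ℂ} : InvW ω (0 : PolyVm 2) := by intro d hd; simp at hd

lemma invW_smul {ω : ℂ} (r : ℂ) {f : PolyVm 2} (hf : InvW ω f) : InvW ω (r • f) := by
  intro d hd
  exact hf d (Finsupp.support_smul hd)

lemma invW_monomial {ω : ℂ} {a b c e : ℕ} (h : ω ^ (a + c) = ω ^ (b + e)) :
    InvW ω (mono a b c e) := by
  rw [mono_eq_monomial]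
  intro d hd
  have := MvPolynomial.support_monomial_subset hd
  rw [Finset.mem_singleton] at this
  subst this
  simpa using h

end CycAux
namespace CycAux
open MvPolynomial Finset

lemma pp_n0_eq (n : ℕ) : pp n 0 = mono n 0 0 0 + mono 0 n 0 0 := by
  simp [pp, mono]
lemma pp_0n_eq (n : ℕ) : pp 0 n = mono 0 0 n 0 + mono 0 0 0 n := by
  simp [pp, mono]
lemma q20_eq : q20 = mono 1 1 0 0 := by simp [q20, mono]
lemma q02_eq : q02 = mono 0 0 1 1 := by simp [q02, mono]

lemma pow_eq_pow_iff_dvd {n : ℕ} (hn : 3 ≤ n) {ω : ℂ} (hω : IsPrimitiveRoot ω n)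
    (p q : ℕ) : ω ^ p = ω ^ q ↔ (n:ℤ) ∣ (p:ℤ) - q := by
  have hω0 : ω ≠ 0 := hω.ne_zero (by omega)
  have h2 : (ω ^ ((p:ℤ) - q) = 1) ↔ (n:ℤ) ∣ ((p:ℤ) - q) := hω.zpow_eq_one_iff_dvd _
  rw [← h2, zpow_sub₀ hω0, zpow_natCast, zpow_natCast,
    div_eq_one_iff_eq (pow_ne_zero _ hω0)]

lemma invW_gen {n : ℕ} {ω : ℂ} (hω : IsPrimitiveRoot ω n)
    {f : PolyVm 2} (hf : f ∈ ({pp n 0, q20, pp 0 n, q02} : Set (PolyVm 2))) : InvW ω f := by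
  have h1 : ω ^ n = 1 := hω.pow_eq_one
  rcases hf with rfl | rfl | rfl | rfl
  · rw [pp_n0_eq]
    exact invW_add (invW_monomial (by simp [h1])) (invW_monomial (by simp [h1]))
  · rw [q20_eq]; exact invW_monomial rfl
  · rw [pp_0n_eq]
    exact invW_add (invW_monomial (by simp [h1])) (invW_monomial (by simp [h1]))
  · rw [q02_eq]; exact invW_monomial rfl

lemma invW_adjoin {n : ℕ} {ω : ℂ} (hω : IsPrimitiveRoot ω n)
    {f : PolyVm 2} (hf : f ∈ Algebra.adjoin ℂ {pp n 0, q20, pp 0 n, q02}) : InvW ω f := by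
  induction hf using Algebra.adjoin_induction with
  | mem x hx => exact invW_gen hω hx
  | algebraMap r => exact invW_C r
  | add x y _ _ hx hy => exact invW_add hx hy
  | mul x y _ _ hx hy => exact invW_mul hx hy

/-- The invariants as a submodule over the parameter algebra. -/
def invSubmodule (n : ℕ) (ω : ℂ) (hω : IsPrimitiveRoot ω n) :
    Submodule (Algebra.adjoin ℂ {pp n 0, q20, pp 0 n, q02}) (PolyVm 2) where
  carrier := {f | InvW ω f}
  add_mem' := invW_add
  zero_mem' := invW_zero
  smul_mem' := fun a f hf => by
    have : (a : PolyVm 2) * f ∈ {f : PolyVm 2 | InvW ω f} := invW_mul (invW_adjoin hω a.2) hf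
    simpa [Subalgebra.smul_def] using this

lemma invW_basis {n : ℕ} (hn : 3 ≤ n) {ω : ℂ} (hω : IsPrimitiveRoot ω n)
    (k : Unit ⊕ (Fin (n-1) ⊕ Fin (n-1)) ⊕ (Fin (n-1) ⊕ Fin (n-1)) ⊕ Fin 3) :
    InvW ω (cycBasis n k) := by
  have h1 : ω ^ n = 1 := hω.pow_eq_one
  rcases k with _ | (j | j) | ((i | i) | t)
  · have : cycBasis n (Sum.inl PUnit.unit) = mono 0 0 0 0 := by simp [cycBasis, mono]
    rw [this]; exact invW_monomial rfl
  · have : cycBasis n (Sum.inr (Sum.inl (Sum.inl j)))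
        = mono ((j:ℕ)+1) 0 0 ((j:ℕ)+1) := by
      simp [cycBasis, mono, mul_pow]
    rw [this]; exact invW_monomial (by simp)
  · have : cycBasis n (Sum.inr (Sum.inl (Sum.inr j)))
        = mono 0 ((j:ℕ)+1) ((j:ℕ)+1) 0 := by
      simp [cycBasis, mono, mul_pow]; ring
    rw [this]; exact invW_monomial (by simp)
  · have : cycBasis n (Sum.inr (Sum.inr (Sum.inl (Sum.inl i))))
        = mono (n-((i:ℕ)+1)) 0 ((i:ℕ)+1) 0 := by
      simp [cycBasis, mono]
    rw [this]
    refine invW_monomial ?_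
    have hi : (i:ℕ) + 1 ≤ n := by have := i.2; omega
    rw [Nat.sub_add_cancel hi, h1]
    simp
  · have : cycBasis n (Sum.inr (Sum.inr (Sum.inl (Sum.inr i))))
        = mono 0 (n-((i:ℕ)+1)) 0 ((i:ℕ)+1) := by
      simp [cycBasis, mono]
    rw [this]
    refine invW_monomial ?_
    have hi : (i:ℕ) + 1 ≤ n := by have := i.2; omega
    rw [Nat.sub_add_cancel hi, h1]
    simp
  · fin_cases t
    · have h : mono n 0 0 0 = ((X (0,0) : PolyVm 2) ^ n) := by simp [mono]
      show InvW ω ((X (0,0) : PolyVm 2) ^ n)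
      rw [← h]; exact invW_monomial (by simp [h1])
    · have h : mono 0 0 n 0 = ((X (0,1) : PolyVm 2) ^ n) := by simp [mono]
      show InvW ω ((X (0,1) : PolyVm 2) ^ n)
      rw [← h]; exact invW_monomial (by simp [h1])
    · have h : mono n 0 n 0 = ((X (0,0) : PolyVm 2) ^ n * X (0,1) ^ n) := by
        simp [mono]
      show InvW ω ((X (0,0) : PolyVm 2) ^ n * X (0,1) ^ n)
      rw [← h]
      refine invW_monomial ?_
      rw [pow_add, h1, one_mul]
      simp

end CycAux
namespace CycAux
open MvPolynomial Finset

/-- the span of the basis over the parameter algebra -/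
def Sp (n : ℕ) : Submodule (Algebra.adjoin ℂ {pp n 0, q20, pp 0 n, q02}) (PolyVm 2) :=
  Submodule.span (Algebra.adjoin ℂ {pp n 0, q20, pp 0 n, q02}) (Set.range (cycBasis n))

lemma Sp_smul {n : ℕ} {x f : PolyVm 2}
    (hx : x ∈ Algebra.adjoin ℂ {pp n 0, q20, pp 0 n, q02}) (hf : f ∈ Sp n) :
    x * f ∈ Sp n :=
  Submodule.smul_mem _ (⟨x, hx⟩ : Algebra.adjoin ℂ {pp n 0, q20, pp 0 n, q02}) hf

lemma hp1 (n : ℕ) : pp n 0 ∈ Algebra.adjoin ℂ {pp n 0, q20, pp 0 n, q02} :=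
  Algebra.subset_adjoin (by simp)
lemma hq1 (n : ℕ) : q20 ∈ Algebra.adjoin ℂ {pp n 0, q20, pp 0 n, q02} :=
  Algebra.subset_adjoin (by simp)
lemma hp2 (n : ℕ) : pp 0 n ∈ Algebra.adjoin ℂ {pp n 0, q20, pp 0 n, q02} :=
  Algebra.subset_adjoin (by simp)
lemma hq2 (n : ℕ) : q02 ∈ Algebra.adjoin ℂ {pp n 0, q20, pp 0 n, q02} :=
  Algebra.subset_adjoin (by simp)

-- basis membership
lemma mem_b1 (n : ℕ) : mono 0 0 0 0 ∈ Sp n :=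
  Submodule.subset_span ⟨Sum.inl (), by simp [cycBasis, mono]⟩

lemma memXY {n j : ℕ} (h1 : 1 ≤ j) (h2 : j ≤ n - 1) : mono j 0 0 j ∈ Sp n := by
  refine Submodule.subset_span ⟨Sum.inr (Sum.inl (Sum.inl ⟨j-1, by omega⟩)), ?_⟩
  have hj : j - 1 + 1 = j := by omega
  simp only [cycBasis, Sum.elim_inr, Sum.elim_inl, hj, mono, mul_pow]
  ring

lemma memYX {n j : ℕ} (h1 : 1 ≤ j) (h2 : j ≤ n - 1) : mono 0 j j 0 ∈ Sp n := by
  refine Submodule.subset_span ⟨Sum.inr (Sum.inl (Sum.inr ⟨j-1, by omega⟩)), ?_⟩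
  have hj : j - 1 + 1 = j := by omega
  simp only [cycBasis, Sum.elim_inr, Sum.elim_inl, hj, mono, mul_pow]
  ring

lemma memXX {n a c : ℕ} (h : a + c = n) (ha : 1 ≤ a) (hc : 1 ≤ c) : mono a 0 c 0 ∈ Sp n := by
  refine Submodule.subset_span ⟨Sum.inr (Sum.inr (Sum.inl (Sum.inl ⟨c-1, by omega⟩))), ?_⟩
  have hc' : c - 1 + 1 = c := by omega
  have ha' : n - c = a := by omega
  simp only [cycBasis, Sum.elim_inr, Sum.elim_inl, hc', ha', mono]
  ring

lemma memYY {n b e : ℕ} (h : b + e = n) (hb : 1 ≤ b) (he : 1 ≤ e) : mono 0 b 0 e ∈ Sp n := by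
  refine Submodule.subset_span ⟨Sum.inr (Sum.inr (Sum.inl (Sum.inr ⟨e-1, by omega⟩))), ?_⟩
  have he' : e - 1 + 1 = e := by omega
  have hb' : n - e = b := by omega
  simp only [cycBasis, Sum.elim_inr, Sum.elim_inl, he', hb', mono]
  ring

lemma memX1n (n : ℕ) : mono n 0 0 0 ∈ Sp n := by
  refine Submodule.subset_span ⟨Sum.inr (Sum.inr (Sum.inr 0)), ?_⟩
  simp [cycBasis, mono]

lemma memX2n (n : ℕ) : mono 0 0 n 0 ∈ Sp n := by
  refine Submodule.subset_span ⟨Sum.inr (Sum.inr (Sum.inr 1)), ?_⟩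
  simp [cycBasis, mono]

lemma memXXn (n : ℕ) : mono n 0 n 0 ∈ Sp n := by
  refine Submodule.subset_span ⟨Sum.inr (Sum.inr (Sum.inr 2)), ?_⟩
  simp [cycBasis, mono]

-- identities
lemma id_strip1 (a b c e : ℕ) : mono (a+1) (b+1) c e = q20 * mono a b c e := by
  simp only [mono, q20]; ring

lemma id_strip2 (a b c e : ℕ) : mono a b (c+1) (e+1) = q02 * mono a b c e := by
  simp only [mono, q02]; ring

lemma id_x1 {n : ℕ} (hn : 1 ≤ n) (t c e : ℕ) :
    mono (n+1+t) 0 c e = pp n 0 * mono (1+t) 0 c e - q20 * mono t (n-1) c e := by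
  obtain ⟨m, rfl⟩ : ∃ m, n = m + 1 := ⟨n-1, by omega⟩
  simp only [mono, pp, q20, Nat.add_sub_cancel]
  ring

lemma id_y1 {n : ℕ} (hn : 1 ≤ n) (t c e : ℕ) :
    mono 0 (n+1+t) c e = pp n 0 * mono 0 (1+t) c e - q20 * mono (n-1) t c e := by
  obtain ⟨m, rfl⟩ : ∃ m, n = m + 1 := ⟨n-1, by omega⟩
  simp only [mono, pp, q20, Nat.add_sub_cancel]
  ring

lemma id_x2 {n : ℕ} (hn : 1 ≤ n) (a b t : ℕ) :
    mono a b (n+1+t) 0 = pp 0 n * mono a b (1+t) 0 - q02 * mono a b t (n-1) := by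
  obtain ⟨m, rfl⟩ : ∃ m, n = m + 1 := ⟨n-1, by omega⟩
  simp only [mono, pp, q02, Nat.add_sub_cancel]
  ring

lemma id_y2 {n : ℕ} (hn : 1 ≤ n) (a b t : ℕ) :
    mono a b 0 (n+1+t) = pp 0 n * mono a b 0 (1+t) - q02 * mono a b (n-1) t := by
  obtain ⟨m, rfl⟩ : ∃ m, n = m + 1 := ⟨n-1, by omega⟩
  simp only [mono, pp, q02, Nat.add_sub_cancel]
  ring

lemma id_direct1 {n : ℕ} : mono n 0 0 n = pp 0 n * mono n 0 0 0 - mono n 0 n 0 := by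
  simp only [mono, pp]; ring

lemma id_direct2 {n : ℕ} : mono 0 0 0 n = pp 0 n * mono 0 0 0 0 - mono 0 0 n 0 := by
  simp only [mono, pp]; ring

lemma id_direct3 {n : ℕ} : mono 0 n n 0 = pp n 0 * mono 0 0 n 0 - mono n 0 n 0 := by
  simp only [mono, pp]; ring

lemma id_direct4 {n : ℕ} : mono 0 n 0 0 = pp n 0 * mono 0 0 0 0 - mono n 0 0 0 := by
  simp only [mono, pp]; ring

lemma id_direct5 {n : ℕ} : mono 0 n 0 n
    = pp n 0 * (pp 0 n * mono 0 0 0 0) - pp n 0 * mono 0 0 n 0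
      - pp 0 n * mono n 0 0 0 + mono n 0 n 0 := by
  simp only [mono, pp]; ring

end CycAux
namespace CycAux
open MvPolynomial Finset

lemma dvd_shift {n : ℕ} {W Z : ℤ} (h : (n:ℤ) ∣ W) (s : ℤ) (hZ : Z = W + n * s) :
    (n:ℤ) ∣ Z := hZ ▸ dvd_add h (Dvd.intro _ rfl)

lemma mono_mem_Sp {n : ℕ} (hn : 3 ≤ n) :
    ∀ N a b c e : ℕ, a + b + c + e ≤ N → ((n:ℤ) ∣ ((a:ℤ)+(c:ℤ)) - ((b:ℤ)+(e:ℤ))) →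
      mono a b c e ∈ Sp n := by
  intro N
  induction N with
  | zero =>
    intro a b c e hdeg _
    obtain ⟨rfl, rfl, rfl, rfl⟩ : a = 0 ∧ b = 0 ∧ c = 0 ∧ e = 0 := by omega
    exact mem_b1 n
  | succ N IH =>
    intro a b c e hdeg hdvd
    by_cases hab : 1 ≤ a ∧ 1 ≤ b
    · obtain ⟨a', rfl⟩ : ∃ a', a = a'+1 := ⟨a-1, by omega⟩
      obtain ⟨b', rfl⟩ : ∃ b', b = b'+1 := ⟨b-1, by omega⟩
      rw [id_strip1]
      exact Sp_smul (hq1 n) (IH a' b' c e (by omega)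
        (dvd_shift hdvd 0 (by push_cast; ring)))
    by_cases hce : 1 ≤ c ∧ 1 ≤ e
    · obtain ⟨c', rfl⟩ : ∃ c', c = c'+1 := ⟨c-1, by omega⟩
      obtain ⟨e', rfl⟩ : ∃ e', e = e'+1 := ⟨e-1, by omega⟩
      rw [id_strip2]
      exact Sp_smul (hq2 n) (IH a b c' e' (by omega)
        (dvd_shift hdvd 0 (by push_cast; ring)))
    by_cases hb : b = 0
    · by_cases he : e = 0
      · -- CASE I : b = 0, e = 0
        subst hb he
        have hdN : n ∣ a + c := by
          have h1 : ((n:ℤ)) ∣ ((a:ℤ) + c) := by simpa using hdvd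
          exact_mod_cast h1
        obtain ⟨k, hk⟩ := hdN
        match k, hk with
        | 0, hk =>
          obtain ⟨rfl, rfl⟩ : a = 0 ∧ c = 0 := by omega
          exact mem_b1 n
        | 1, hk =>
          rw [Nat.mul_one] at hk
          by_cases ha0 : a = 0
          · subst ha0
            have hcn : c = n := by omega
            rw [hcn]
            exact memX2n n
          by_cases hc0 : c = 0
          · subst hc0
            have han : a = n := by omega
            rw [han]
            exact memX1n n
          · exact memXX hk (by omega) (by omega)
        | (k'+2), hk =>
          obtain ⟨M, hM⟩ : ∃ M, a + c = M + n + n := ⟨n*k', by rw [hk]; ring⟩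
          by_cases ha : n+1 ≤ a
          · obtain ⟨t, rfl⟩ : ∃ t, a = n+1+t := ⟨a-(n+1), by omega⟩
            rw [id_x1 (by omega) t c 0]
            exact Submodule.sub_mem _
              (Sp_smul (hp1 n) (IH (1+t) 0 c 0 (by omega)
                (dvd_shift hdvd (-1) (by push_cast; ring))))
              (Sp_smul (hq1 n) (IH t (n-1) c 0 (by omega)
                (dvd_shift hdvd (-2) (by
                  have hn1 : ((n-1:ℕ):ℤ) = (n:ℤ) - 1 := by
                    rw [Nat.cast_sub (by omega)]; norm_num
                  rw [hn1]; push_cast; ring))))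
          by_cases hc : n+1 ≤ c
          · obtain ⟨t, rfl⟩ : ∃ t, c = n+1+t := ⟨c-(n+1), by omega⟩
            rw [id_x2 (by omega) a 0 t]
            exact Submodule.sub_mem _
              (Sp_smul (hp2 n) (IH a 0 (1+t) 0 (by omega)
                (dvd_shift hdvd (-1) (by push_cast; ring))))
              (Sp_smul (hq2 n) (IH a 0 t (n-1) (by omega)
                (dvd_shift hdvd (-2) (by
                  have hn1 : ((n-1:ℕ):ℤ) = (n:ℤ) - 1 := by
                    rw [Nat.cast_sub (by omega)]; norm_num
                  rw [hn1]; push_cast; ring))))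
          · obtain ⟨h1, h2⟩ : a = n ∧ c = n := by omega
            rw [h1, h2]
            exact memXXn n
      · -- CASE II : b = 0, e ≥ 1, hence c = 0
        subst hb
        have hc0 : c = 0 := by omega
        subst hc0
        rcases lt_trichotomy a e with hae | hae | hae
        · -- a < e
          have hdN : n ∣ e - a := by
            have h1 : ((n:ℤ)) ∣ ((e:ℤ) - a) := by
              have : (n:ℤ) ∣ -(_ : ℤ) := (dvd_neg.mpr hdvd)
              convert this using 1; push_cast; ring
            have h2 : ((e - a : ℕ) : ℤ) = (e:ℤ) - a := by
              rw [Nat.cast_sub (by omega)]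
            rw [← h2] at h1
            exact_mod_cast h1
          have hne : n ≤ e - a := Nat.le_of_dvd (by omega) hdN
          by_cases he1 : n+1 ≤ e
          · obtain ⟨t, rfl⟩ : ∃ t, e = n+1+t := ⟨e-(n+1), by omega⟩
            rw [id_y2 (by omega) a 0 t]
            exact Submodule.sub_mem _
              (Sp_smul (hp2 n) (IH a 0 0 (1+t) (by omega)
                (dvd_shift hdvd 1 (by push_cast; ring))))
              (Sp_smul (hq2 n) (IH a 0 (n-1) t (by omega)
                (dvd_shift hdvd 2 (by
                  have hn1 : ((n-1:ℕ):ℤ) = (n:ℤ) - 1 := by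
                    rw [Nat.cast_sub (by omega)]; norm_num
                  rw [hn1]; push_cast; ring))))
          · obtain ⟨h1, h2⟩ : a = 0 ∧ e = n := by omega
            rw [h1, h2, id_direct2]
            exact Submodule.sub_mem _ (Sp_smul (hp2 n) (mem_b1 n)) (memX2n n)
        · -- a = e
          subst hae
          by_cases han : a ≤ n - 1
          · exact memXY (by omega) han
          by_cases han' : a = n
          · rw [han', id_direct1]
            exact Submodule.sub_mem _ (Sp_smul (hp2 n) (memX1n n)) (memXXn n)
          · obtain ⟨t, rfl⟩ : ∃ t, a = n+1+t := ⟨a-(n+1), by omega⟩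
            rw [id_x1 (by omega) t 0 (n+1+t)]
            exact Submodule.sub_mem _
              (Sp_smul (hp1 n) (IH (1+t) 0 0 (n+1+t) (by omega)
                (dvd_shift hdvd (-1) (by push_cast; ring))))
              (Sp_smul (hq1 n) (IH t (n-1) 0 (n+1+t) (by omega)
                (dvd_shift hdvd (-2) (by
                  have hn1 : ((n-1:ℕ):ℤ) = (n:ℤ) - 1 := by
                    rw [Nat.cast_sub (by omega)]; norm_num
                  rw [hn1]; push_cast; ring))))
        · -- a > e
          have hdN : n ∣ a - e := by
            have h1 : ((n:ℤ)) ∣ ((a:ℤ) - e) := by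
              convert hdvd using 1; push_cast; ring
            have h2 : ((a - e : ℕ) : ℤ) = (a:ℤ) - e := by
              rw [Nat.cast_sub (by omega)]
            rw [← h2] at h1
            exact_mod_cast h1
          have hne : n ≤ a - e := Nat.le_of_dvd (by omega) hdN
          obtain ⟨t, rfl⟩ : ∃ t, a = n+1+t := ⟨a-(n+1), by omega⟩
          rw [id_x1 (by omega) t 0 e]
          exact Submodule.sub_mem _
            (Sp_smul (hp1 n) (IH (1+t) 0 0 e (by omega)
              (dvd_shift hdvd (-1) (by push_cast; ring))))
            (Sp_smul (hq1 n) (IH t (n-1) 0 e (by omega)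
              (dvd_shift hdvd (-2) (by
                have hn1 : ((n-1:ℕ):ℤ) = (n:ℤ) - 1 := by
                  rw [Nat.cast_sub (by omega)]; norm_num
                rw [hn1]; push_cast; ring))))
    · -- b ≥ 1, hence a = 0
      have ha0 : a = 0 := by omega
      subst ha0
      by_cases he : e = 0
      · -- CASE III : a = 0, e = 0
        subst he
        rcases lt_trichotomy b c with hbc | hbc | hbc
        · -- b < c
          have hdN : n ∣ c - b := by
            have h1 : ((n:ℤ)) ∣ ((c:ℤ) - b) := by
              convert hdvd using 1; push_cast; ring
            have h2 : ((c - b : ℕ) : ℤ) = (c:ℤ) - b := by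
              rw [Nat.cast_sub (by omega)]
            rw [← h2] at h1
            exact_mod_cast h1
          have hne : n ≤ c - b := Nat.le_of_dvd (by omega) hdN
          obtain ⟨t, rfl⟩ : ∃ t, c = n+1+t := ⟨c-(n+1), by omega⟩
          rw [id_x2 (by omega) 0 b t]
          exact Submodule.sub_mem _
            (Sp_smul (hp2 n) (IH 0 b (1+t) 0 (by omega)
              (dvd_shift hdvd (-1) (by push_cast; ring))))
            (Sp_smul (hq2 n) (IH 0 b t (n-1) (by omega)
              (dvd_shift hdvd (-2) (by
                have hn1 : ((n-1:ℕ):ℤ) = (n:ℤ) - 1 := by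
                  rw [Nat.cast_sub (by omega)]; norm_num
                rw [hn1]; push_cast; ring))))
        · -- b = c
          subst hbc
          by_cases hbn : b ≤ n - 1
          · exact memYX (by omega) hbn
          by_cases hbn' : b = n
          · rw [hbn', id_direct3]
            exact Submodule.sub_mem _ (Sp_smul (hp1 n) (memX2n n)) (memXXn n)
          · obtain ⟨t, rfl⟩ : ∃ t, b = n+1+t := ⟨b-(n+1), by omega⟩
            rw [id_y1 (by omega) t (n+1+t) 0]
            exact Submodule.sub_mem _
              (Sp_smul (hp1 n) (IH 0 (1+t) (n+1+t) 0 (by omega)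
                (dvd_shift hdvd 1 (by push_cast; ring))))
              (Sp_smul (hq1 n) (IH (n-1) t (n+1+t) 0 (by omega)
                (dvd_shift hdvd 2 (by
                  have hn1 : ((n-1:ℕ):ℤ) = (n:ℤ) - 1 := by
                    rw [Nat.cast_sub (by omega)]; norm_num
                  rw [hn1]; push_cast; ring))))
        · -- b > c
          have hdN : n ∣ b - c := by
            have h1 : ((n:ℤ)) ∣ ((b:ℤ) - c) := by
              have : (n:ℤ) ∣ -(_ : ℤ) := (dvd_neg.mpr hdvd)
              convert this using 1; push_cast; ring
            have h2 : ((b - c : ℕ) : ℤ) = (b:ℤ) - c := by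
              rw [Nat.cast_sub (by omega)]
            rw [← h2] at h1
            exact_mod_cast h1
          have hne : n ≤ b - c := Nat.le_of_dvd (by omega) hdN
          by_cases hb1 : n+1 ≤ b
          · obtain ⟨t, rfl⟩ : ∃ t, b = n+1+t := ⟨b-(n+1), by omega⟩
            rw [id_y1 (by omega) t c 0]
            exact Submodule.sub_mem _
              (Sp_smul (hp1 n) (IH 0 (1+t) c 0 (by omega)
                (dvd_shift hdvd 1 (by push_cast; ring))))
              (Sp_smul (hq1 n) (IH (n-1) t c 0 (by omega)
                (dvd_shift hdvd 2 (by
                  have hn1 : ((n-1:ℕ):ℤ) = (n:ℤ) - 1 := by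
                    rw [Nat.cast_sub (by omega)]; norm_num
                  rw [hn1]; push_cast; ring))))
          · obtain ⟨h1, h2⟩ : b = n ∧ c = 0 := by omega
            rw [h1, h2, id_direct4]
            exact Submodule.sub_mem _ (Sp_smul (hp1 n) (mem_b1 n)) (memX1n n)
      · -- CASE IV : a = 0, b ≥ 1, e ≥ 1, hence c = 0
        have hc0 : c = 0 := by omega
        subst hc0
        have hdN : n ∣ b + e := by
          have h1 : ((n:ℤ)) ∣ ((b:ℤ) + e) := by
            have : (n:ℤ) ∣ -(_ : ℤ) := (dvd_neg.mpr hdvd)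
            convert this using 1; push_cast; ring
          exact_mod_cast h1
        obtain ⟨k, hk⟩ := hdN
        match k, hk with
        | 0, hk =>
          obtain ⟨rfl, rfl⟩ : b = 0 ∧ e = 0 := by omega
          exact mem_b1 n
        | 1, hk =>
          rw [Nat.mul_one] at hk
          exact memYY hk (by omega) (by omega)
        | (k'+2), hk =>
          obtain ⟨M, hM⟩ : ∃ M, b + e = M + n + n := ⟨n*k', by rw [hk]; ring⟩
          by_cases hbn : n+1 ≤ b
          · obtain ⟨t, rfl⟩ : ∃ t, b = n+1+t := ⟨b-(n+1), by omega⟩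
            rw [id_y1 (by omega) t 0 e]
            exact Submodule.sub_mem _
              (Sp_smul (hp1 n) (IH 0 (1+t) 0 e (by omega)
                (dvd_shift hdvd 1 (by push_cast; ring))))
              (Sp_smul (hq1 n) (IH (n-1) t 0 e (by omega)
                (dvd_shift hdvd 2 (by
                  have hn1 : ((n-1:ℕ):ℤ) = (n:ℤ) - 1 := by
                    rw [Nat.cast_sub (by omega)]; norm_num
                  rw [hn1]; push_cast; ring))))
          by_cases hen : n+1 ≤ e
          · obtain ⟨t, rfl⟩ : ∃ t, e = n+1+t := ⟨e-(n+1), by omega⟩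
            rw [id_y2 (by omega) 0 b t]
            exact Submodule.sub_mem _
              (Sp_smul (hp2 n) (IH 0 b 0 (1+t) (by omega)
                (dvd_shift hdvd 1 (by push_cast; ring))))
              (Sp_smul (hq2 n) (IH 0 b (n-1) t (by omega)
                (dvd_shift hdvd 2 (by
                  have hn1 : ((n-1:ℕ):ℤ) = (n:ℤ) - 1 := by
                    rw [Nat.cast_sub (by omega)]; norm_num
                  rw [hn1]; push_cast; ring))))
          · obtain ⟨h1, h2⟩ : b = n ∧ e = n := by omega
            rw [h1, h2, id_direct5]
            refine Submodule.add_mem _ (Submodule.sub_mem _ (Submodule.sub_mem _ ?_ ?_) ?_)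
              (memXXn n)
            · exact Sp_smul (hp1 n) (Sp_smul (hp2 n) (mem_b1 n))
            · exact Sp_smul (hp1 n) (memX2n n)
            · exact Sp_smul (hp2 n) (memX1n n)

end CycAux
namespace CycAux
open MvPolynomial Finset

lemma part2 {n : ℕ} (hn : 3 ≤ n) {ω : ℂ} (hω : IsPrimitiveRoot ω n) (f : PolyVm 2) :
    f ∈ invAlg 2 {dMat ω} ↔ f ∈ Sp n := by
  rw [mem_invAlg_iff_invW n hn ω hω]
  constructor
  · intro h
    rw [← f.support_sum_monomial_coeff]
    refine Submodule.sum_mem _ ?_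
    intro d hd
    rw [monomial_eq_smul_mono, smul_eq_C_mul]
    refine Sp_smul ?_ ?_
    · rw [← algebraMap_eq]
      exact Subalgebra.algebraMap_mem _ _
    · refine mono_mem_Sp hn (d (0,0) + d (1,0) + d (0,1) + d (1,1)) _ _ _ _ le_rfl ?_
      have hdvd := (pow_eq_pow_iff_dvd hn hω (xdeg d) (ydeg d)).mp (h d hd)
      simp only [xdeg, ydeg] at hdvd
      push_cast at hdvd ⊢
      convert hdvd using 1
  · intro h
    have hle : Sp n ≤ invSubmodule n ω hω := by
      rw [Sp, Submodule.span_le]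
      rintro x ⟨k, rfl⟩
      exact invW_basis hn hω k
    exact hle h

end CycAux
namespace CycAux
open MvPolynomial Finset

abbrev K (n : ℕ) := Unit ⊕ (Fin (n-1) ⊕ Fin (n-1)) ⊕ (Fin (n-1) ⊕ Fin (n-1)) ⊕ Fin 3

def nu1 (n : ℕ) : K n → ℕ :=
  Sum.elim (fun _ => 0)
    (Sum.elim (Sum.elim (fun j => (j:ℕ)+1) (fun j => n-((j:ℕ)+1)))
      (Sum.elim (Sum.elim (fun i => n-((i:ℕ)+1)) (fun i => (i:ℕ)+1)) (fun _ => 0)))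

def nu2 (n : ℕ) : K n → ℕ :=
  Sum.elim (fun _ => 0)
    (Sum.elim (Sum.elim (fun j => n-((j:ℕ)+1)) (fun j => (j:ℕ)+1))
      (Sum.elim (Sum.elim (fun i => (i:ℕ)+1) (fun i => n-((i:ℕ)+1))) (fun _ => 0)))

lemma nu1_lt {n : ℕ} (hn : 3 ≤ n) (k : K n) : nu1 n k < n := by
  rcases k with _ | (j | j) | ((i | i) | t) <;>
    simp [nu1] <;> omega

lemma nu2_lt {n : ℕ} (hn : 3 ≤ n) (k : K n) : nu2 n k < n := by
  rcases k with _ | (j | j) | ((i | i) | t) <;>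
    simp [nu2] <;> omega

/-- swap `x₁ ↔ y₁` -/
def tau1 : PolyVm 2 →ₐ[ℂ] PolyVm 2 :=
  rename (fun v => if v.2 = 0 then (v.1 + 1, v.2) else v)

/-- swap `x₂ ↔ y₂` -/
def tau2 : PolyVm 2 →ₐ[ℂ] PolyVm 2 :=
  rename (fun v => if v.2 = 1 then (v.1 + 1, v.2) else v)

@[simp] lemma tau1_X00 : tau1 (X (0,0)) = X (1,0) := by simp [tau1, rename_X]
@[simp] lemma tau1_X0 : tau1 (X (0 : Fin 2 × Fin 2)) = X (1,0) := by simp [tau1, rename_X]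
@[simp] lemma tau1_X10 : tau1 (X (1,0)) = X (0,0) := by simp [tau1, rename_X]
@[simp] lemma tau1_X01 : tau1 (X (0,1)) = X (0,1) := by simp [tau1, rename_X]
@[simp] lemma tau1_X11 : tau1 (X (1,1)) = X (1,1) := by simp [tau1, rename_X]
@[simp] lemma tau1_X1 : tau1 (X (1 : Fin 2 × Fin 2)) = X 1 := by simp [tau1, rename_X]
@[simp] lemma tau2_X00 : tau2 (X (0,0)) = X (0,0) := by simp [tau2, rename_X]
@[simp] lemma tau2_X0 : tau2 (X (0 : Fin 2 × Fin 2)) = X 0 := by simp [tau2, rename_X]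
@[simp] lemma tau2_X10 : tau2 (X (1,0)) = X (1,0) := by simp [tau2, rename_X]
@[simp] lemma tau2_X01 : tau2 (X (0,1)) = X (1,1) := by simp [tau2, rename_X]
@[simp] lemma tau2_X11 : tau2 (X (1,1)) = X (0,1) := by simp [tau2, rename_X]
@[simp] lemma tau2_X1 : tau2 (X (1 : Fin 2 × Fin 2)) = X (0,1) := by simp [tau2, rename_X]

lemma fix_adjoin {n : ℕ} {φ : PolyVm 2 →ₐ[ℂ] PolyVm 2}
    (h1 : φ (pp n 0) = pp n 0) (h2 : φ q20 = q20)
    (h3 : φ (pp 0 n) = pp 0 n) (h4 : φ q02 = q02)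
    {f : PolyVm 2} (hf : f ∈ Algebra.adjoin ℂ {pp n 0, q20, pp 0 n, q02}) : φ f = f := by
  induction hf using Algebra.adjoin_induction with
  | mem x hx => rcases hx with rfl | rfl | rfl | rfl <;> assumption
  | algebraMap r => exact φ.commutes r
  | add x y _ _ hx hy => rw [map_add, hx, hy]
  | mul x y _ _ hx hy => rw [map_mul, hx, hy]

lemma tau1_fix {n : ℕ} {f : PolyVm 2}
    (hf : f ∈ Algebra.adjoin ℂ {pp n 0, q20, pp 0 n, q02}) : tau1 f = f := by
  refine fix_adjoin ?_ ?_ ?_ ?_ hf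
  · simp [pp, map_add, map_mul, map_pow]; ring
  · simp [q20, map_mul]; ring
  · simp [pp, map_add, map_mul, map_pow]
  · simp [q02, map_mul]

lemma tau2_fix {n : ℕ} {f : PolyVm 2}
    (hf : f ∈ Algebra.adjoin ℂ {pp n 0, q20, pp 0 n, q02}) : tau2 f = f := by
  refine fix_adjoin ?_ ?_ ?_ ?_ hf
  · simp [pp, map_add, map_mul, map_pow]
  · simp [q20, map_mul]
  · simp [pp, map_add, map_mul, map_pow]; ring
  · simp [q02, map_mul]; ring

/-- scale `x₁ ↦ λx₁`, `y₁ ↦ λ⁻¹y₁` -/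
def scl1 (lam : ℂ) : PolyVm 2 →ₐ[ℂ] PolyVm 2 :=
  dscale (fun v => if v = (0,0) then lam else if v = (1,0) then lam⁻¹ else 1)

/-- scale `x₂ ↦ λx₂`, `y₂ ↦ λ⁻¹y₂` -/
def scl2 (lam : ℂ) : PolyVm 2 →ₐ[ℂ] PolyVm 2 :=
  dscale (fun v => if v = (0,1) then lam else if v = (1,1) then lam⁻¹ else 1)

@[simp] lemma scl1_X00 (lam : ℂ) : scl1 lam (X (0,0)) = lam • X (0,0) := by
  rw [scl1, dscale_X, if_pos rfl]
@[simp] lemma scl1_X0 (lam : ℂ) : scl1 lam (X (0 : Fin 2 × Fin 2)) = lam • X 0 :=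
  scl1_X00 lam
@[simp] lemma scl1_X10 (lam : ℂ) : scl1 lam (X (1,0)) = lam⁻¹ • X (1,0) := by
  rw [scl1, dscale_X, if_neg (by decide), if_pos rfl]
@[simp] lemma scl1_X01 (lam : ℂ) : scl1 lam (X (0,1)) = X (0,1) := by
  rw [scl1, dscale_X, if_neg (by decide), if_neg (by decide), one_smul]
@[simp] lemma scl1_X11 (lam : ℂ) : scl1 lam (X (1,1)) = X (1,1) := by
  rw [scl1, dscale_X, if_neg (by decide), if_neg (by decide), one_smul]
@[simp] lemma scl1_X1 (lam : ℂ) : scl1 lam (X (1 : Fin 2 × Fin 2)) = X 1 := by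
  rw [scl1, dscale_X, if_neg (by decide), if_neg (by decide), one_smul]
@[simp] lemma scl2_X00 (lam : ℂ) : scl2 lam (X (0,0)) = X (0,0) := by
  rw [scl2, dscale_X, if_neg (by decide), if_neg (by decide), one_smul]
@[simp] lemma scl2_X0 (lam : ℂ) : scl2 lam (X (0 : Fin 2 × Fin 2)) = X 0 := by
  rw [scl2, dscale_X, if_neg (by decide), if_neg (by decide), one_smul]
@[simp] lemma scl2_X10 (lam : ℂ) : scl2 lam (X (1,0)) = X (1,0) := by
  rw [scl2, dscale_X, if_neg (by decide), if_neg (by decide), one_smul]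
@[simp] lemma scl2_X01 (lam : ℂ) : scl2 lam (X (0,1)) = lam • X (0,1) := by
  rw [scl2, dscale_X, if_pos rfl]
@[simp] lemma scl2_X11 (lam : ℂ) : scl2 lam (X (1,1)) = lam⁻¹ • X (1,1) := by
  rw [scl2, dscale_X, if_neg (by decide), if_pos rfl]
@[simp] lemma scl2_X1 (lam : ℂ) : scl2 lam (X (1 : Fin 2 × Fin 2)) = lam⁻¹ • X 1 :=
  scl2_X11 lam

lemma scl1_fix {n : ℕ} {lam : ℂ} (hl : lam ^ n = 1) (hl0 : lam ≠ 0) {f : PolyVm 2}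
    (hf : f ∈ Algebra.adjoin ℂ {pp n 0, q20, pp 0 n, q02}) : scl1 lam f = f := by
  have hinv : (lam⁻¹) ^ n = 1 := by rw [inv_pow, hl, inv_one]
  refine fix_adjoin ?_ ?_ ?_ ?_ hf
  · simp [pp, map_add, map_mul, map_pow, smul_pow, hl, hinv]
  · simp [q20, map_mul, smul_smul, mul_inv_cancel₀ hl0, inv_mul_cancel₀ hl0]
  · simp [pp, map_add, map_mul, map_pow]
  · simp [q02, map_mul]

lemma scl2_fix {n : ℕ} {lam : ℂ} (hl : lam ^ n = 1) (hl0 : lam ≠ 0) {f : PolyVm 2}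
    (hf : f ∈ Algebra.adjoin ℂ {pp n 0, q20, pp 0 n, q02}) : scl2 lam f = f := by
  have hinv : (lam⁻¹) ^ n = 1 := by rw [inv_pow, hl, inv_one]
  refine fix_adjoin ?_ ?_ ?_ ?_ hf
  · simp [pp, map_add, map_mul, map_pow]
  · simp [q20, map_mul]
  · simp [pp, map_add, map_mul, map_pow, smul_pow, hl, hinv]
  · simp [q02, map_mul, smul_smul, mul_inv_cancel₀ hl0, inv_mul_cancel₀ hl0]

lemma pow_sub_inv {n m : ℕ} {lam : ℂ} (hl : lam ^ n = 1) (hm : m ≤ n) :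
    lam ^ (n - m) = (lam ^ m)⁻¹ := by
  refine eq_inv_of_mul_eq_one_left ?_
  rw [← pow_add, Nat.sub_add_cancel hm, hl]

lemma scl1_basis {n : ℕ} (hn : 3 ≤ n) {lam : ℂ} (hl : lam ^ n = 1) (hl0 : lam ≠ 0)
    (k : K n) : scl1 lam (cycBasis n k) = lam ^ nu1 n k • cycBasis n k := by
  rcases k with _ | (j | j) | ((i | i) | t)
  · simp [cycBasis, nu1]
  · have hj : (j:ℕ) + 1 ≤ n := by have := j.2; omega
    simp only [cycBasis, nu1, Sum.elim_inl, Sum.elim_inr, map_pow, map_mul,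
      scl1_X00, scl1_X11]
    rw [smul_mul_assoc, smul_pow]
  · have hj : (j:ℕ) + 1 ≤ n := by have := j.2; omega
    simp only [cycBasis, nu1, Sum.elim_inl, Sum.elim_inr, map_pow, map_mul,
      scl1_X01, scl1_X10]
    rw [mul_smul_comm, smul_pow, pow_sub_inv hl hj, inv_pow]
  · have hi : (i:ℕ) + 1 ≤ n := by have := i.2; omega
    simp only [cycBasis, nu1, Sum.elim_inl, Sum.elim_inr, map_pow, map_mul,
      scl1_X00, scl1_X01]
    rw [smul_pow, smul_mul_assoc]
  · have hi : (i:ℕ) + 1 ≤ n := by have := i.2; omega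
    simp only [cycBasis, nu1, Sum.elim_inl, Sum.elim_inr, map_pow, map_mul,
      scl1_X10, scl1_X11]
    rw [smul_pow, smul_mul_assoc, inv_pow, ← pow_sub_inv hl (by omega : n - ((i:ℕ)+1) ≤ n),
      show n - (n - ((i:ℕ)+1)) = (i:ℕ)+1 by omega]
  · fin_cases t <;>
      simp [cycBasis, nu1, map_pow, map_mul, smul_pow, hl, smul_mul_assoc]

lemma scl2_basis {n : ℕ} (hn : 3 ≤ n) {lam : ℂ} (hl : lam ^ n = 1) (hl0 : lam ≠ 0)
    (k : K n) : scl2 lam (cycBasis n k) = lam ^ nu2 n k • cycBasis n k := by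
  rcases k with _ | (j | j) | ((i | i) | t)
  · simp [cycBasis, nu2]
  · have hj : (j:ℕ) + 1 ≤ n := by have := j.2; omega
    simp only [cycBasis, nu2, Sum.elim_inl, Sum.elim_inr, map_pow, map_mul,
      scl2_X00, scl2_X11]
    rw [mul_smul_comm, smul_pow, pow_sub_inv hl hj, inv_pow]
  · have hj : (j:ℕ) + 1 ≤ n := by have := j.2; omega
    simp only [cycBasis, nu2, Sum.elim_inl, Sum.elim_inr, map_pow, map_mul,
      scl2_X01, scl2_X10]
    rw [smul_mul_assoc, smul_pow]
  · have hi : (i:ℕ) + 1 ≤ n := by have := i.2; omega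
    simp only [cycBasis, nu2, Sum.elim_inl, Sum.elim_inr, map_pow, map_mul,
      scl2_X00, scl2_X01]
    rw [smul_pow, mul_smul_comm]
  · have hi : (i:ℕ) + 1 ≤ n := by have := i.2; omega
    simp only [cycBasis, nu2, Sum.elim_inl, Sum.elim_inr, map_pow, map_mul,
      scl2_X10, scl2_X11]
    rw [smul_pow, mul_smul_comm, inv_pow, pow_sub_inv hl hi]
  · fin_cases t <;>
      simp [cycBasis, nu2, map_pow, map_mul, smul_pow, hl, mul_smul_comm]

lemma charSum {n : ℕ} (hn : 3 ≤ n) {ω : ℂ} (hω : IsPrimitiveRoot ω n)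
    (u v : ℕ) (hu : u < n) (hv : v < n) :
    ∑ s ∈ Finset.range n, ((ω^u)^s * ((ω^v)^s)⁻¹) = if u = v then (n:ℂ) else 0 := by
  have hω0 : ω ≠ 0 := hω.ne_zero (by omega)
  have hωn : ω ^ n = 1 := hω.pow_eq_one
  have hsummand : ∀ s, (ω^u)^s * ((ω^v)^s)⁻¹ = (ω^u * (ω^v)⁻¹)^s := by
    intro s; rw [mul_pow, inv_pow]
  simp only [hsummand]
  set ζ := ω^u * (ω^v)⁻¹ with hζ
  by_cases huv : u = v
  · subst huv
    have : ζ = 1 := mul_inv_cancel₀ (pow_ne_zero _ hω0)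
    simp [this]
  · have hζn : ζ ^ n = 1 := by
      rw [hζ, mul_pow, inv_pow, ← pow_mul, ← pow_mul, mul_comm u n, mul_comm v n,
        pow_mul, pow_mul, hωn, one_pow, one_pow, inv_one, mul_one]
    have hζ1 : ζ ≠ 1 := fun hc =>
      huv (hω.pow_inj hu hv ((mul_inv_eq_one₀ (pow_ne_zero v hω0)).mp hc))
    have hgs := geom_sum_mul ζ n
    rw [hζn, sub_self] at hgs
    have hsum := (mul_eq_zero.mp hgs).resolve_right (sub_ne_zero.mpr hζ1)
    simp [huv, hsum]

end CycAux
namespace CycAux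
open MvPolynomial Finset

lemma triple_swap {α : Type*} [AddCommMonoid α] {ι : Type*} [Fintype ι] (m : ℕ)
    (Y : ι → ℕ → ℕ → α)
    (h : ∀ s ∈ Finset.range m, ∀ t ∈ Finset.range m, ∑ k, Y k s t = 0) :
    ∑ k, ∑ s ∈ Finset.range m, ∑ t ∈ Finset.range m, Y k s t = 0 := by
  rw [Finset.sum_comm]
  refine Finset.sum_eq_zero fun s hs => ?_
  rw [Finset.sum_comm]
  exact Finset.sum_eq_zero fun t ht => h s hs t ht

set_option maxHeartbeats 1000000 in
lemma class_eq {n : ℕ} (hn : 3 ≤ n) {ω : ℂ} (hω : IsPrimitiveRoot ω n)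
    (G : K n → PolyVm 2) (hG : ∀ k, G k ∈ Algebra.adjoin ℂ {pp n 0, q20, pp 0 n, q02})
    (hsum : ∑ k : K n, G k * cycBasis n k = 0) (k₀ : K n) :
    ∑ k : K n, (if nu1 n k = nu1 n k₀ ∧ nu2 n k = nu2 n k₀
      then G k * cycBasis n k else 0) = 0 := by
  have hω0 : ω ≠ 0 := hω.ne_zero (by omega)
  have hωn : ω ^ n = 1 := hω.pow_eq_one
  have hpow1 : ∀ s : ℕ, (ω ^ s) ^ n = 1 := fun s => by
    rw [← pow_mul, mul_comm, pow_mul, hωn, one_pow]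
  have hstep : ∀ s t : ℕ,
      ∑ k : K n, ((ω ^ nu1 n k)^s * (ω ^ nu2 n k)^t) • (G k * cycBasis n k) = 0 := by
    intro s t
    have h1 : scl2 (ω^t) (scl1 (ω^s) (∑ k : K n, G k * cycBasis n k)) = 0 := by
      rw [hsum, map_zero, map_zero]
    rw [map_sum, map_sum] at h1
    rw [← h1]
    refine Finset.sum_congr rfl ?_
    intro k _
    rw [map_mul, scl1_fix (hpow1 s) (pow_ne_zero _ hω0) (hG k),
      scl1_basis hn (hpow1 s) (pow_ne_zero _ hω0) k,
      map_mul, scl2_fix (hpow1 t) (pow_ne_zero _ hω0) (hG k), map_smul,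
      scl2_basis hn (hpow1 t) (pow_ne_zero _ hω0) k]
    simp only [smul_smul, mul_smul_comm]
    congr 1
    ring
  have h2 : ∀ s t : ℕ,
      ∑ k : K n, ((((ω ^ nu1 n k)^s * ((ω ^ nu1 n k₀)^s)⁻¹))
        * (((ω ^ nu2 n k)^t * ((ω ^ nu2 n k₀)^t)⁻¹))) • (G k * cycBasis n k) = 0 := by
    intro s t
    have h3 := congrArg
      (fun z => ((((ω ^ nu1 n k₀)^s)⁻¹ * ((ω ^ nu2 n k₀)^t)⁻¹)) • z) (hstep s t)
    simp only [smul_zero] at h3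
    rw [Finset.smul_sum] at h3
    rw [← h3]
    refine Finset.sum_congr rfl ?_
    intro k _
    rw [smul_smul]
    congr 1
    ring
  have hbig : ∑ k : K n,
      ((∑ s ∈ Finset.range n, (ω ^ nu1 n k)^s * ((ω ^ nu1 n k₀)^s)⁻¹)
        * (∑ t ∈ Finset.range n, (ω ^ nu2 n k)^t * ((ω ^ nu2 n k₀)^t)⁻¹))
        • (G k * cycBasis n k) = 0 := by
    have hexp : ∀ k : K n, ((∑ s ∈ Finset.range n, (ω ^ nu1 n k)^s * ((ω ^ nu1 n k₀)^s)⁻¹)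
        * (∑ t ∈ Finset.range n, (ω ^ nu2 n k)^t * ((ω ^ nu2 n k₀)^t)⁻¹))
        • (G k * cycBasis n k)
        = ∑ s ∈ Finset.range n, ∑ t ∈ Finset.range n,
          ((((ω ^ nu1 n k)^s * ((ω ^ nu1 n k₀)^s)⁻¹))
            * (((ω ^ nu2 n k)^t * ((ω ^ nu2 n k₀)^t)⁻¹))) • (G k * cycBasis n k) := by
      intro k
      rw [Finset.sum_mul_sum, Finset.sum_smul]
      exact Finset.sum_congr rfl (fun s _ => by rw [Finset.sum_smul])
    refine (Finset.sum_congr rfl (fun k _ => hexp k)).trans ?_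
    refine triple_swap n _ (fun s _ t _ => h2 s t)
  have hchar1 : ∀ k : K n, (∑ s ∈ Finset.range n, (ω ^ nu1 n k)^s * ((ω ^ nu1 n k₀)^s)⁻¹)
      = if nu1 n k = nu1 n k₀ then (n:ℂ) else 0 :=
    fun k => charSum hn hω _ _ (nu1_lt hn k) (nu1_lt hn k₀)
  have hchar2 : ∀ k : K n, (∑ t ∈ Finset.range n, (ω ^ nu2 n k)^t * ((ω ^ nu2 n k₀)^t)⁻¹)
      = if nu2 n k = nu2 n k₀ then (n:ℂ) else 0 :=
    fun k => charSum hn hω _ _ (nu2_lt hn k) (nu2_lt hn k₀)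
  simp only [hchar1, hchar2] at hbig
  have hper : ∀ k : K n,
      ((if nu1 n k = nu1 n k₀ then (n:ℂ) else 0) * (if nu2 n k = nu2 n k₀ then (n:ℂ) else 0))
        • (G k * cycBasis n k)
      = ((n:ℂ)*(n:ℂ)) • (if nu1 n k = nu1 n k₀ ∧ nu2 n k = nu2 n k₀
          then G k * cycBasis n k else 0) := by
    intro k
    by_cases h1 : nu1 n k = nu1 n k₀ <;> by_cases h2' : nu2 n k = nu2 n k₀ <;>
      simp [h1, h2']
  rw [Finset.sum_congr rfl (fun k _ => hper k), ← Finset.smul_sum] at hbig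
  have hnn : ((n:ℂ)*(n:ℂ)) ≠ 0 := by
    have : (n:ℂ) ≠ 0 := by exact_mod_cast (by omega : n ≠ 0)
    exact mul_ne_zero this this
  exact (smul_eq_zero.mp hbig).resolve_left hnn

end CycAux
namespace CycAux
open MvPolynomial Finset

lemma Xpow_ne_zero (v : Fin 2 × Fin 2) (m : ℕ) : (X v : PolyVm 2) ^ m ≠ 0 :=
  pow_ne_zero _ (X_ne_zero v)

lemma Xpow_sub_ne {u v : Fin 2 × Fin 2} (huv : u ≠ v) {m : ℕ} (hm : 1 ≤ m) :
    (X u : PolyVm 2) ^ m - (X v) ^ m ≠ 0 := by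
  intro h
  have hc := congrArg (coeff (Finsupp.single u m)) h
  rw [coeff_sub, X_pow_eq_monomial, X_pow_eq_monomial, coeff_monomial, coeff_monomial,
    if_pos rfl, if_neg (fun hne => huv ((Finsupp.single_left_inj (by omega)).mp hne).symm)] at hc
  simp at hc

lemma mul_right_zero_cancel {f g : PolyVm 2} (hg : g ≠ 0) (h : f * g = 0) : f = 0 :=
  (mul_eq_zero.mp h).resolve_right hg

lemma elim_class0 {n : ℕ} (hn : 3 ≤ n) {A B C D : PolyVm 2}
    (hA : A ∈ Algebra.adjoin ℂ {pp n 0, q20, pp 0 n, q02})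
    (hB : B ∈ Algebra.adjoin ℂ {pp n 0, q20, pp 0 n, q02})
    (hC : C ∈ Algebra.adjoin ℂ {pp n 0, q20, pp 0 n, q02})
    (hD : D ∈ Algebra.adjoin ℂ {pp n 0, q20, pp 0 n, q02})
    (h : A + B * (X (0,0) : PolyVm 2)^n + C * (X (0,1) : PolyVm 2)^n
        + D * ((X (0,0) : PolyVm 2)^n * X (0,1)^n) = 0) :
    A = 0 ∧ B = 0 ∧ C = 0 ∧ D = 0 := by
  have hn1 : 1 ≤ n := by omega
  have hτ1 : A + B * (X (1,0) : PolyVm 2)^n + C * (X (0,1) : PolyVm 2)^n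
      + D * ((X (1,0) : PolyVm 2)^n * X (0,1)^n) = 0 := by
    have := congrArg tau1 h
    simp only [map_add, map_mul, map_pow, tau1_X00, tau1_X01, map_zero,
      tau1_fix hA, tau1_fix hB, tau1_fix hC, tau1_fix hD] at this
    exact this
  have h1 : (B + D * (X (0,1) : PolyVm 2)^n) * ((X (0,0) : PolyVm 2)^n - (X (1,0))^n) = 0 := by
    linear_combination h - hτ1
  have hBD : B + D * (X (0,1) : PolyVm 2)^n = 0 :=
    mul_right_zero_cancel (Xpow_sub_ne (by decide) hn1) h1
  have hτ2BD : B + D * (X (1,1) : PolyVm 2)^n = 0 := by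
    have := congrArg tau2 hBD
    simp only [map_add, map_mul, map_pow, tau2_X01, map_zero,
      tau2_fix hB, tau2_fix hD] at this
    exact this
  have hD2 : D * ((X (0,1) : PolyVm 2)^n - (X (1,1))^n) = 0 := by
    linear_combination hBD - hτ2BD
  have hD0 : D = 0 := mul_right_zero_cancel (Xpow_sub_ne (by decide) hn1) hD2
  have hB0 : B = 0 := by linear_combination hBD - (X (0,1) : PolyVm 2)^n * hD0
  have hAC : A + C * (X (0,1) : PolyVm 2)^n = 0 := by
    linear_combination h - (X (0,0) : PolyVm 2)^n * hBD
  have hτ2AC : A + C * (X (1,1) : PolyVm 2)^n = 0 := by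
    have := congrArg tau2 hAC
    simp only [map_add, map_mul, map_pow, tau2_X01, map_zero,
      tau2_fix hA, tau2_fix hC] at this
    exact this
  have hC2 : C * ((X (0,1) : PolyVm 2)^n - (X (1,1))^n) = 0 := by
    linear_combination hAC - hτ2AC
  have hC0 : C = 0 := mul_right_zero_cancel (Xpow_sub_ne (by decide) hn1) hC2
  have hA0 : A = 0 := by linear_combination hAC - (X (0,1) : PolyVm 2)^n * hC0
  exact ⟨hA0, hB0, hC0, hD0⟩

lemma elim_classr {n : ℕ} (r m : ℕ) (hr : 1 ≤ r) (hm : 1 ≤ m)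
    {A B C D : PolyVm 2}
    (hA : A ∈ Algebra.adjoin ℂ {pp n 0, q20, pp 0 n, q02})
    (hB : B ∈ Algebra.adjoin ℂ {pp n 0, q20, pp 0 n, q02})
    (hC : C ∈ Algebra.adjoin ℂ {pp n 0, q20, pp 0 n, q02})
    (hD : D ∈ Algebra.adjoin ℂ {pp n 0, q20, pp 0 n, q02})
    (h : A * ((X (0,0) : PolyVm 2)^r * (X (1,1))^r)
        + B * ((X (1,0) : PolyVm 2)^m * (X (1,1))^r)
        + C * ((X (0,1) : PolyVm 2)^m * (X (1,0))^m)
        + D * ((X (0,0) : PolyVm 2)^r * (X (0,1))^m) = 0) :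
    A = 0 ∧ B = 0 ∧ C = 0 ∧ D = 0 := by
  have hτ2 : A * ((X (0,0) : PolyVm 2)^r * (X (0,1))^r)
      + B * ((X (1,0) : PolyVm 2)^m * (X (0,1))^r)
      + C * ((X (1,1) : PolyVm 2)^m * (X (1,0))^m)
      + D * ((X (0,0) : PolyVm 2)^r * (X (1,1))^m) = 0 := by
    have := congrArg tau2 h
    simp only [map_add, map_mul, map_pow, tau2_X00, tau2_X01, tau2_X10, tau2_X11, map_zero,
      tau2_fix hA, tau2_fix hB, tau2_fix hC, tau2_fix hD] at this
    exact this
  set U : PolyVm 2 := A * (X (0,0))^r + B * (X (1,0))^m with hUdef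
  set V : PolyVm 2 := C * (X (1,0))^m + D * (X (0,0))^r with hVdef
  have hα : (X (1,1) : PolyVm 2)^r * U + (X (0,1) : PolyVm 2)^m * V = 0 := by
    rw [hUdef, hVdef]; linear_combination h
  have hβ : (X (0,1) : PolyVm 2)^r * U + (X (1,1) : PolyVm 2)^m * V = 0 := by
    rw [hUdef, hVdef]; linear_combination hτ2
  have hU2 : ((X (1,1) : PolyVm 2)^(r+m) - (X (0,1))^(r+m)) * U = 0 := by
    rw [pow_add, pow_add]
    linear_combination (X (1,1) : PolyVm 2)^m * hα - (X (0,1) : PolyVm 2)^m * hβ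
  have hU : U = 0 := by
    rcases mul_eq_zero.mp hU2 with h' | h'
    · exact absurd h' (Xpow_sub_ne (by decide) (by omega))
    · exact h'
  have hV2 : (X (0,1) : PolyVm 2)^m * V = 0 := by
    linear_combination hα - (X (1,1) : PolyVm 2)^r * hU
  have hV : V = 0 := by
    rcases mul_eq_zero.mp hV2 with h' | h'
    · exact absurd h' (Xpow_ne_zero _ _)
    · exact h'
  have hUτ : A * (X (1,0) : PolyVm 2)^r + B * (X (0,0))^m = 0 := by
    have := congrArg tau1 hU
    rw [hUdef] at this
    simp only [map_add, map_mul, map_pow, tau1_X00, tau1_X10, map_zero,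
      tau1_fix hA, tau1_fix hB] at this
    exact this
  rw [hUdef] at hU
  have hB2 : B * ((X (1,0) : PolyVm 2)^(r+m) - (X (0,0))^(r+m)) = 0 := by
    rw [pow_add, pow_add]
    linear_combination (X (1,0) : PolyVm 2)^r * hU - (X (0,0) : PolyVm 2)^r * hUτ
  have hB0 : B = 0 :=
    mul_right_zero_cancel (Xpow_sub_ne (by decide) (by omega)) hB2
  have hA2 : A * (X (0,0) : PolyVm 2)^r = 0 := by
    linear_combination hU - (X (1,0) : PolyVm 2)^m * hB0
  have hA0 : A = 0 := mul_right_zero_cancel (Xpow_ne_zero _ _) hA2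
  have hVτ : C * (X (0,0) : PolyVm 2)^m + D * (X (1,0))^r = 0 := by
    have := congrArg tau1 hV
    rw [hVdef] at this
    simp only [map_add, map_mul, map_pow, tau1_X00, tau1_X10, map_zero,
      tau1_fix hC, tau1_fix hD] at this
    exact this
  rw [hVdef] at hV
  have hD2 : D * ((X (0,0) : PolyVm 2)^(r+m) - (X (1,0))^(r+m)) = 0 := by
    rw [pow_add, pow_add]
    linear_combination (X (0,0) : PolyVm 2)^m * hV - (X (1,0) : PolyVm 2)^m * hVτ
  have hD0 : D = 0 :=
    mul_right_zero_cancel (Xpow_sub_ne (by decide) (by omega)) hD2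
  have hC2 : C * (X (1,0) : PolyVm 2)^m = 0 := by
    linear_combination hV - (X (0,0) : PolyVm 2)^r * hD0
  have hC0 : C = 0 := mul_right_zero_cancel (Xpow_ne_zero _ _) hC2
  exact ⟨hA0, hB0, hC0, hD0⟩

end CycAux
namespace CycAux
open MvPolynomial Finset

@[simp] lemma nu1_unit {n : ℕ} (u : Unit) : nu1 n (Sum.inl u) = 0 := rfl
@[simp] lemma nu1_xy {n : ℕ} (j : Fin (n-1)) :
    nu1 n (Sum.inr (Sum.inl (Sum.inl j))) = (j:ℕ)+1 := rfl
@[simp] lemma nu1_yx {n : ℕ} (j : Fin (n-1)) :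
    nu1 n (Sum.inr (Sum.inl (Sum.inr j))) = n-((j:ℕ)+1) := rfl
@[simp] lemma nu1_xx {n : ℕ} (i : Fin (n-1)) :
    nu1 n (Sum.inr (Sum.inr (Sum.inl (Sum.inl i)))) = n-((i:ℕ)+1) := rfl
@[simp] lemma nu1_yy {n : ℕ} (i : Fin (n-1)) :
    nu1 n (Sum.inr (Sum.inr (Sum.inl (Sum.inr i)))) = (i:ℕ)+1 := rfl
@[simp] lemma nu1_f3 {n : ℕ} (t : Fin 3) : nu1 n (Sum.inr (Sum.inr (Sum.inr t))) = 0 := rfl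
@[simp] lemma nu2_unit {n : ℕ} (u : Unit) : nu2 n (Sum.inl u) = 0 := rfl
@[simp] lemma nu2_xy {n : ℕ} (j : Fin (n-1)) :
    nu2 n (Sum.inr (Sum.inl (Sum.inl j))) = n-((j:ℕ)+1) := rfl
@[simp] lemma nu2_yx {n : ℕ} (j : Fin (n-1)) :
    nu2 n (Sum.inr (Sum.inl (Sum.inr j))) = (j:ℕ)+1 := rfl
@[simp] lemma nu2_xx {n : ℕ} (i : Fin (n-1)) :
    nu2 n (Sum.inr (Sum.inr (Sum.inl (Sum.inl i)))) = (i:ℕ)+1 := rfl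
@[simp] lemma nu2_yy {n : ℕ} (i : Fin (n-1)) :
    nu2 n (Sum.inr (Sum.inr (Sum.inl (Sum.inr i)))) = n-((i:ℕ)+1) := rfl
@[simp] lemma nu2_f3 {n : ℕ} (t : Fin 3) : nu2 n (Sum.inr (Sum.inr (Sum.inr t))) = 0 := rfl

lemma extract0 {n : ℕ} (hn : 3 ≤ n) (F : K n → PolyVm 2) :
    ∑ k : K n, (if nu1 n k = 0 ∧ nu2 n k = 0 then F k else 0)
      = F (Sum.inl ()) + (F (Sum.inr (Sum.inr (Sum.inr 0)))
        + F (Sum.inr (Sum.inr (Sum.inr 1))) + F (Sum.inr (Sum.inr (Sum.inr 2)))) := by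
  simp [Fintype.sum_sum_type, Fin.sum_univ_three]

lemma extractr {n : ℕ} (hn : 3 ≤ n) (j : Fin (n-1)) (F : K n → PolyVm 2) :
    ∑ k : K n, (if nu1 n k = (j:ℕ)+1 ∧ nu2 n k = n-((j:ℕ)+1) then F k else 0)
      = F (Sum.inr (Sum.inl (Sum.inl j)))
        + F (Sum.inr (Sum.inl (Sum.inr ⟨n-((j:ℕ)+1)-1, by omega⟩)))
        + F (Sum.inr (Sum.inr (Sum.inl (Sum.inl ⟨n-((j:ℕ)+1)-1, by omega⟩))))
        + F (Sum.inr (Sum.inr (Sum.inl (Sum.inr j)))) := by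
  have hj := j.2
  simp only [Fintype.sum_sum_type]
  have e_unit : ∑ u : Unit, (if nu1 n (Sum.inl u : K n) = (j:ℕ)+1
      ∧ nu2 n (Sum.inl u : K n) = n-((j:ℕ)+1) then F (Sum.inl u) else 0) = 0 :=
    Finset.sum_eq_zero fun u _ => if_neg (fun hc => by
      have h1 := hc.1; simp only [nu1_unit] at h1; omega)
  have e_f3 : ∑ t : Fin 3, (if nu1 n (Sum.inr (Sum.inr (Sum.inr t)) : K n) = (j:ℕ)+1
      ∧ nu2 n (Sum.inr (Sum.inr (Sum.inr t)) : K n) = n-((j:ℕ)+1)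
      then F (Sum.inr (Sum.inr (Sum.inr t))) else 0) = 0 :=
    Finset.sum_eq_zero fun t _ => if_neg (fun hc => by
      have h1 := hc.1; simp only [nu1_f3] at h1; omega)
  have e_xy : (∑ j' : Fin (n-1), if nu1 n (Sum.inr (Sum.inl (Sum.inl j')) : K n) = (j:ℕ)+1
      ∧ nu2 n (Sum.inr (Sum.inl (Sum.inl j')) : K n) = n-((j:ℕ)+1)
      then F (Sum.inr (Sum.inl (Sum.inl j'))) else 0) = F (Sum.inr (Sum.inl (Sum.inl j))) := by
    rw [Finset.sum_eq_single_of_mem j (Finset.mem_univ j)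
      (fun j' _ hj' => if_neg (fun hc => hj' (Fin.ext (by
        have h1 := hc.1; simp only [nu1_xy] at h1; omega))))]
    exact if_pos ⟨rfl, rfl⟩
  have e_yx : (∑ j' : Fin (n-1), if nu1 n (Sum.inr (Sum.inl (Sum.inr j')) : K n) = (j:ℕ)+1
      ∧ nu2 n (Sum.inr (Sum.inl (Sum.inr j')) : K n) = n-((j:ℕ)+1)
      then F (Sum.inr (Sum.inl (Sum.inr j'))) else 0)
      = F (Sum.inr (Sum.inl (Sum.inr ⟨n-((j:ℕ)+1)-1, by omega⟩))) := by
    rw [Finset.sum_eq_single_of_mem (⟨n-((j:ℕ)+1)-1, by omega⟩ : Fin (n-1))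
      (Finset.mem_univ _)
      (fun j' _ hj' => if_neg (fun hc => hj' (Fin.ext (by
        have h1 := hc.1; simp only [nu1_yx] at h1
        show (j':ℕ) = n-((j:ℕ)+1)-1
        have := j'.2; omega))))]
    refine if_pos ⟨?_, ?_⟩
    · show n-((n-((j:ℕ)+1)-1)+1) = (j:ℕ)+1
      omega
    · show (n-((j:ℕ)+1)-1)+1 = n-((j:ℕ)+1)
      omega
  have e_xx : (∑ i : Fin (n-1), if nu1 n (Sum.inr (Sum.inr (Sum.inl (Sum.inl i))) : K n) = (j:ℕ)+1
      ∧ nu2 n (Sum.inr (Sum.inr (Sum.inl (Sum.inl i))) : K n) = n-((j:ℕ)+1)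
      then F (Sum.inr (Sum.inr (Sum.inl (Sum.inl i)))) else 0)
      = F (Sum.inr (Sum.inr (Sum.inl (Sum.inl ⟨n-((j:ℕ)+1)-1, by omega⟩)))) := by
    rw [Finset.sum_eq_single_of_mem (⟨n-((j:ℕ)+1)-1, by omega⟩ : Fin (n-1))
      (Finset.mem_univ _)
      (fun i _ hi => if_neg (fun hc => hi (Fin.ext (by
        have h1 := hc.1; simp only [nu1_xx] at h1
        show (i:ℕ) = n-((j:ℕ)+1)-1
        have := i.2; omega))))]
    refine if_pos ⟨?_, ?_⟩
    · show n-((n-((j:ℕ)+1)-1)+1) = (j:ℕ)+1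
      omega
    · show (n-((j:ℕ)+1)-1)+1 = n-((j:ℕ)+1)
      omega
  have e_yy : (∑ i : Fin (n-1), if nu1 n (Sum.inr (Sum.inr (Sum.inl (Sum.inr i))) : K n) = (j:ℕ)+1
      ∧ nu2 n (Sum.inr (Sum.inr (Sum.inl (Sum.inr i))) : K n) = n-((j:ℕ)+1)
      then F (Sum.inr (Sum.inr (Sum.inl (Sum.inr i)))) else 0)
      = F (Sum.inr (Sum.inr (Sum.inl (Sum.inr j)))) := by
    rw [Finset.sum_eq_single_of_mem j (Finset.mem_univ j)
      (fun i _ hi => if_neg (fun hc => hi (Fin.ext (by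
        have h1 := hc.1; simp only [nu1_yy] at h1; omega))))]
    exact if_pos ⟨rfl, rfl⟩
  rw [e_unit, e_f3, e_xy, e_yx, e_xx, e_yy]
  ring

end CycAux
namespace CycAux
open MvPolynomial Finset

lemma indep {n : ℕ} (hn : 3 ≤ n) {ω : ℂ} (hω : IsPrimitiveRoot ω n) :
    LinearIndependent (Algebra.adjoin ℂ {pp n 0, q20, pp 0 n, q02}) (cycBasis n) := by
  rw [Fintype.linearIndependent_iff]
  intro g hg
  have hsum : ∑ k : K n, (g k : PolyVm 2) * cycBasis n k = 0 := hg
  have hclass := class_eq hn hω (fun k => (g k : PolyVm 2)) (fun k => (g k).2) hsum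
  -- class 0
  have h0 := hclass (Sum.inl ())
  rw [show nu1 n (Sum.inl () : K n) = 0 from rfl, show nu2 n (Sum.inl () : K n) = 0 from rfl,
    extract0 hn] at h0
  simp only [cycBasis, Sum.elim_inl, Sum.elim_inr, Matrix.cons_val_zero, Matrix.cons_val_one,
    Matrix.head_cons, Matrix.cons_val_two, Matrix.tail_cons] at h0
  obtain ⟨hz1, hz2, hz3, hz4⟩ :=
    elim_class0 hn (g (Sum.inl ())).2 (g (Sum.inr (Sum.inr (Sum.inr 0)))).2
      (g (Sum.inr (Sum.inr (Sum.inr 1)))).2 (g (Sum.inr (Sum.inr (Sum.inr 2)))).2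
      (by linear_combination h0)
  -- classes r
  have hcls : ∀ j j' : Fin (n-1), (j':ℕ) = n-((j:ℕ)+1)-1 →
      ((g (Sum.inr (Sum.inl (Sum.inl j))) : PolyVm 2) = 0)
      ∧ ((g (Sum.inr (Sum.inr (Sum.inl (Sum.inr j)))) : PolyVm 2) = 0)
      ∧ ((g (Sum.inr (Sum.inl (Sum.inr j'))) : PolyVm 2) = 0)
      ∧ ((g (Sum.inr (Sum.inr (Sum.inl (Sum.inl j')))) : PolyVm 2) = 0) := by
    intro j j' hjj'
    have hj := j.2
    have h1 := hclass (Sum.inr (Sum.inl (Sum.inl j)))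
    rw [show nu1 n (Sum.inr (Sum.inl (Sum.inl j)) : K n) = (j:ℕ)+1 from rfl,
      show nu2 n (Sum.inr (Sum.inl (Sum.inl j)) : K n) = n-((j:ℕ)+1) from rfl,
      extractr hn j] at h1
    simp only [cycBasis, Sum.elim_inl, Sum.elim_inr] at h1
    have hsubst : (⟨n-((j:ℕ)+1)-1, by omega⟩ : Fin (n-1)) = j' :=
      Fin.ext (by show n-((j:ℕ)+1)-1 = (j':ℕ); omega)
    rw [hsubst] at h1
    rw [show n-((j:ℕ)+1)-1+1 = n-((j:ℕ)+1) by omega,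
      show n-(n-((j:ℕ)+1)) = (j:ℕ)+1 by omega] at h1
    have := elim_classr (n := n) ((j:ℕ)+1) (n-((j:ℕ)+1)) (by omega) (by omega)
      (g (Sum.inr (Sum.inl (Sum.inl j)))).2
      (g (Sum.inr (Sum.inr (Sum.inl (Sum.inr j))))).2
      (g (Sum.inr (Sum.inl (Sum.inr j')))).2
      (g (Sum.inr (Sum.inr (Sum.inl (Sum.inl j'))))).2
      (by linear_combination h1)
    exact this
  intro k
  have hz : (g k : PolyVm 2) = 0 := by
    rcases k with _ | (j | j) | ((i | i) | t)
    · exact hz1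
    · exact (hcls j ⟨n-((j:ℕ)+1)-1, by have := j.2; omega⟩ rfl).1
    · have hj := j.2
      exact (hcls ⟨n-((j:ℕ)+1)-1, by omega⟩ j
        (by show (j:ℕ) = n-((n-((j:ℕ)+1)-1)+1)-1; omega)).2.2.1
    · have hi := i.2
      exact (hcls ⟨n-((i:ℕ)+1)-1, by omega⟩ i
        (by show (i:ℕ) = n-((n-((i:ℕ)+1)-1)+1)-1; omega)).2.2.2
    · exact (hcls i ⟨n-((i:ℕ)+1)-1, by have := i.2; omega⟩ rfl).2.1
    · fin_cases t
      · exact hz2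
      · exact hz3
      · exact hz4
  exact Subtype.ext hz

end CycAux
/-- `ℂ[V²]^H`, `H` the cyclic group generated by `diag(ω, ω⁻¹)`, is a free module over
`P(n,2) = ℂ[p_{n,0}, q_{2,0}, p_{0,n}, q_{0,2}]` with the `4n` monomials of `cycBasis`
as a basis. -/
theorem cyclic_invariants_free_over_parameters
    (n : ℕ) (hn : 3 ≤ n) (ω : ℂ) (hω : IsPrimitiveRoot ω n) :
    LinearIndependent (Algebra.adjoin ℂ {pp n 0, q20, pp 0 n, q02}) (cycBasis n) ∧
    ∀ f : PolyVm 2, f ∈ invAlg 2 {dMat ω} ↔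
      f ∈ Submodule.span (Algebra.adjoin ℂ {pp n 0, q20, pp 0 n, q02})
            (Set.range (cycBasis n)) := by
  exact ⟨CycAux.indep hn hω, fun f => CycAux.part2 hn hω f⟩

end
end

section
/- Let F and R be commutative ℕ-graded ℂ-algebras with R connected (R_0 = ℂ), and let φ : F → R be a surjective degree-preserving ℂ-algebra homomorphism. Suppose h_1,…,h_k and t_1,…,t_l are homogeneous elements of F such that φ(h_1),…,φ(h_k) are algebraically independent over ℂ and, writing P := ℂ[φ(h_1),…,φ(h_k)] ⊆ R, the elements φ(t_1),…,φ(t_l) form a basis of R as a P-module. Let K ⊆ ker(φ) be a homogeneous ideal of F, let H be the ideal of F generated by h_1,…,h_k, and let d ∈ ℕ. If F_{≤d} = Span_ℂ{t_j : deg(t_j) ≤ d} + H_{≤d} + K_{≤d}, where for a graded subspace A of F the symbol A_{≤d} denotes the sum of its homogeneous components of degree at most d, then K_{≤d} = (ker φ)_{≤d}. -/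
noncomputable section

/-- Koszul syzygy property for a finite family in a commutative ring. -/
def IsKoszulSeq {A : Type*} [CommRing A] {k : ℕ} (y : Fin k → A) : Prop :=
  ∀ p : Fin k → A, ∑ i, p i * y i = 0 →
    ∃ q : Fin k → Fin k → A, (∀ i j, q i j = - q j i) ∧ ∀ i, p i = ∑ j, q i j * y j

open Polynomial in
theorem isKoszulSeq_polynomial_step {A : Type*} [CommRing A] {k : ℕ} {y : Fin k → A}
    (hy : IsKoszulSeq y) :
    IsKoszulSeq (fun i : Fin (k + 1) =>
      (Fin.cases Polynomial.X (fun j => Polynomial.C (y j)) i : A[X])) := by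
  intro p hp
  rw [Fin.sum_univ_succ] at hp
  simp only [Fin.cases_zero, Fin.cases_succ] at hp
  -- p 0 * X + ∑ j, p j.succ * C (y j) = 0
  set c : Fin k → A := fun j => (p j.succ).coeff 0 with hc
  set r : Fin k → A[X] := fun j => (p j.succ).divX with hr
  have hsplit : ∀ j : Fin k, p j.succ = C (c j) + X * r j := by
    intro j
    have := Polynomial.X_mul_divX_add (p j.succ)
    linear_combination -this
  have key : C (∑ j, c j * y j) + X * (p 0 + ∑ j, r j * C (y j)) = 0 := by
    rw [← hp]
    simp only [map_sum, C_mul, mul_add, Finset.mul_sum]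
    have : ∑ j, p j.succ * C (y j)
        = ∑ j, (C (c j) * C (y j) + X * (r j * C (y j))) :=
      Finset.sum_congr rfl fun j _ => by rw [hsplit j]; ring
    rw [this, Finset.sum_add_distrib]
    ring
  have h0 : ∑ j, c j * y j = 0 := by
    have := congrArg (fun q => Polynomial.coeff q 0) key
    simpa using this
  have hX : X * (p 0 + ∑ j, r j * C (y j)) = 0 := by
    rw [h0] at key; simpa using key
  have hv : p 0 + ∑ j, r j * C (y j) = 0 := by
    ext n
    have := congrArg (fun q => Polynomial.coeff q (n + 1)) hX
    simpa [Polynomial.coeff_X_mul] using this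
  obtain ⟨q, hqa, hqe⟩ := hy c h0
  refine ⟨fun i j => Fin.cases (Fin.cases 0 (fun m => -(r m)) j)
      (fun i' => Fin.cases (r i') (fun m => C (q i' m)) j) i, ?_, ?_⟩
  · intro i j
    refine Fin.cases ?_ (fun i' => ?_) i
    · refine Fin.cases ?_ (fun m => ?_) j <;> simp
    · refine Fin.cases ?_ (fun m => ?_) j
      · simp
      · simp [hqa i' m]
  · intro i
    refine Fin.cases ?_ (fun i' => ?_) i
    · rw [Fin.sum_univ_succ]
      simp only [Fin.cases_zero, Fin.cases_succ]
      have : p 0 = -∑ j, r j * C (y j) := by linear_combination hv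
      rw [this]
      simp [Finset.sum_neg_distrib]
    · rw [Fin.sum_univ_succ]
      simp only [Fin.cases_zero, Fin.cases_succ]
      rw [hsplit i', hqe i']
      simp only [map_sum, C_mul]
      ring

theorem IsKoszulSeq.congr {A : Type*} [CommRing A] {k : ℕ} {y z : Fin k → A}
    (h : ∀ i, y i = z i) (hy : IsKoszulSeq y) : IsKoszulSeq z := by
  have : y = z := funext h
  subst this; exact hy

theorem IsKoszulSeq.map_equiv {A B : Type*} [CommRing A] [CommRing B] (e : A ≃+* B)
    {k : ℕ} {y : Fin k → A} (hy : IsKoszulSeq y) : IsKoszulSeq (fun i => e (y i)) := by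
  intro p hp
  have hp' : ∑ i, e.symm (p i) * y i = 0 := by
    apply e.injective
    simpa [map_sum] using hp
  obtain ⟨q, hqa, hqe⟩ := hy _ hp'
  refine ⟨fun i j => e (q i j), fun i j => ?_, fun i => ?_⟩
  · show e (q i j) = - e (q j i)
    rw [hqa i j, map_neg]
  · have := congrArg e (hqe i)
    simpa [map_sum] using this

theorem isKoszulSeq_X (k : ℕ) :
    IsKoszulSeq (fun i : Fin k => (MvPolynomial.X i : MvPolynomial (Fin k) ℂ)) := by
  induction k with
  | zero => intro p hp; exact ⟨fun i j => 0, fun i => i.elim0, fun i => i.elim0⟩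
  | succ n ih =>
    have step := isKoszulSeq_polynomial_step (y := fun i : Fin n =>
      (MvPolynomial.X i : MvPolynomial (Fin n) ℂ)) ih
    refine (step.map_equiv (MvPolynomial.finSuccEquiv ℂ n).symm.toRingEquiv).congr
      (fun i => ?_)
    refine Fin.cases ?_ (fun j => ?_) i
    · simp only [Fin.cases_zero, AlgEquiv.coe_ringEquiv]
      apply (MvPolynomial.finSuccEquiv ℂ n).injective
      simp [← AlgEquiv.symm_toRingEquiv, MvPolynomial.finSuccEquiv_X_zero]
    · simp only [Fin.cases_succ, AlgEquiv.coe_ringEquiv]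
      apply (MvPolynomial.finSuccEquiv ℂ n).injective
      simp [← AlgEquiv.symm_toRingEquiv, MvPolynomial.finSuccEquiv_X_succ]

/-- **A criterion for capturing all relations up to a given degree** (Lemma 6.4).
Let `φ : F → R` be a surjective degree-preserving homomorphism of graded `ℂ`-algebras
with `R` connected, `φ(h₁), …, φ(h_k)` algebraically independent, and `φ(t₁), …, φ(t_l)`
a basis of `R` as a module over `P = ℂ[φ(h₁), …, φ(h_k)]`.  If `K ⊆ ker φ` is a
homogeneous ideal with `F_{≤d} = Span{t_j : deg t_j ≤ d} + H_{≤d} + K_{≤d}` (`H` the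
ideal generated by the `h_i`), then `K_{≤d} = (ker φ)_{≤d}`. -/
theorem homogeneous_ideal_eq_ker_upto_degree
    {F R : Type*} [CommRing F] [CommRing R] [Algebra ℂ F] [Algebra ℂ R]
    (𝒜 : ℕ → Submodule ℂ F) (ℬ : ℕ → Submodule ℂ R)
    [GradedAlgebra 𝒜] [GradedAlgebra ℬ]
    (hconn : ∀ r ∈ ℬ 0, ∃ c : ℂ, r = algebraMap ℂ R c)
    (φ : F →ₐ[ℂ] R) (hsurj : Function.Surjective φ)
    (hdegpres : ∀ e : ℕ, ∀ f ∈ 𝒜 e, φ f ∈ ℬ e)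
    (k l : ℕ) (h : Fin k → F) (t : Fin l → F) (dh : Fin k → ℕ) (dt : Fin l → ℕ)
    (hh : ∀ i, h i ∈ 𝒜 (dh i)) (ht : ∀ j, t j ∈ 𝒜 (dt j))
    (hindep : AlgebraicIndependent ℂ (fun i => φ (h i)))
    (hli : LinearIndependent (Algebra.adjoin ℂ (Set.range fun i => φ (h i)))
      (fun j => φ (t j)))
    (hspan : Submodule.span (Algebra.adjoin ℂ (Set.range fun i => φ (h i)))
      (Set.range fun j => φ (t j)) = ⊤)
    (K : Ideal F) (hK : K ≤ RingHom.ker φ) (hKhom : Ideal.IsHomogeneous 𝒜 K)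
    (d : ℕ)
    (hlow : (⨆ e, ⨆ _ : e ≤ d, 𝒜 e) =
        Submodule.span ℂ {x | ∃ j, dt j ≤ d ∧ x = t j}
        ⊔ (⨆ e, ⨆ _ : e ≤ d,
            Submodule.restrictScalars ℂ (Ideal.span (Set.range h)) ⊓ 𝒜 e)
        ⊔ (⨆ e, ⨆ _ : e ≤ d, Submodule.restrictScalars ℂ K ⊓ 𝒜 e)) :
    (⨆ e, ⨆ _ : e ≤ d, Submodule.restrictScalars ℂ K ⊓ 𝒜 e) =
      (⨆ e, ⨆ _ : e ≤ d, Submodule.restrictScalars ℂ (RingHom.ker φ) ⊓ 𝒜 e) := by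
  classical
  set x : Fin k → R := fun i => φ (h i) with hxdef
  set P := Algebra.adjoin ℂ (Set.range fun i => φ (h i)) with hPdef
  have hxmem : ∀ i, x i ∈ P := fun i => Algebra.subset_adjoin ⟨i, rfl⟩
  -- coe-of-decompose-of-sum helpers
  have hdsA : ∀ {ι : Type} (s : Finset ι) (v : ι → F) (n : ℕ),
      (DirectSum.decompose 𝒜 (∑ i ∈ s, v i) n : F)
        = ∑ i ∈ s, (DirectSum.decompose 𝒜 (v i) n : F) := by
    intro ι s v n
    rw [DirectSum.decompose_sum, DFinsupp.finset_sum_apply,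
      AddSubmonoidClass.coe_finset_sum]
  have hdsB : ∀ {ι : Type} (s : Finset ι) (v : ι → R) (n : ℕ),
      (DirectSum.decompose ℬ (∑ i ∈ s, v i) n : R)
        = ∑ i ∈ s, (DirectSum.decompose ℬ (v i) n : R) := by
    intro ι s v n
    rw [DirectSum.decompose_sum, DFinsupp.finset_sum_apply,
      AddSubmonoidClass.coe_finset_sum]
  -- φ commutes with taking homogeneous components
  have hcomm : ∀ (a : F) (n : ℕ),
      φ ((DirectSum.decompose 𝒜 a n : F)) = (DirectSum.decompose ℬ (φ a) n : R) := by
    intro a n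
    conv_rhs => rw [← DirectSum.sum_support_decompose 𝒜 a]
    rw [map_sum, hdsB]
    rw [Finset.sum_eq_single n
      (fun m _ hm => DirectSum.decompose_of_mem_ne ℬ
        (hdegpres m _ (SetLike.coe_mem _)) hm)
      (fun hn => by
        rw [DFinsupp.notMem_support_iff] at hn
        simp [hn])]
    exact (DirectSum.decompose_of_mem_same ℬ (hdegpres n _ (SetLike.coe_mem _))).symm
  -- kernel of φ is homogeneous
  have hkerhom : ∀ a : F, φ a = 0 → ∀ n, φ ((DirectSum.decompose 𝒜 a n : F)) = 0 := by
    intro a ha n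
    rw [hcomm, ha]
    simp
  -- representation of elements of P via aeval
  have hPrep : ∀ p : P, ∃ Q : MvPolynomial (Fin k) ℂ, (p : R) = MvPolynomial.aeval x Q := by
    intro p
    have hp2 : (p : R) ∈ (MvPolynomial.aeval (R := ℂ) x).range := by
      rw [← Algebra.adjoin_range_eq_range_aeval ℂ x]
      exact p.2
    obtain ⟨Q, hQ⟩ := hp2
    exact ⟨Q, hQ.symm⟩
  -- representation in the spanning family
  have hrep : ∀ r : R, ∃ p : Fin l → P, ∑ j, (p j : R) * φ (t j) = r := by
    intro r
    have : r ∈ Submodule.span P (Set.range fun j => φ (t j)) := by rw [hspan]; trivial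
    obtain ⟨p, hp⟩ := (Submodule.mem_span_range_iff_exists_fun P).mp this
    refine ⟨p, ?_⟩
    rw [← hp]
    exact Finset.sum_congr rfl fun j _ => by rw [Subalgebra.smul_def, smul_eq_mul]
  have hli' : ∀ z : Fin l → P, (∑ j, z j • φ (t j)) = 0 → ∀ j, z j = 0 :=
    Fintype.linearIndependent_iff.mp hli
  -- constants are not in the ideal generated by the x i
  have hconst : ∀ (c : ℂ) (p : Fin k → P),
      algebraMap ℂ R c + ∑ i, (p i : R) * x i = 0 → c = 0 := by
    intro c p hcp
    choose Q hQ using fun i => hPrep (p i)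
    have : MvPolynomial.aeval x (MvPolynomial.C c + ∑ i, Q i * MvPolynomial.X i)
        = MvPolynomial.aeval x (0 : MvPolynomial (Fin k) ℂ) := by
      have hsum : ∑ i, MvPolynomial.aeval x (Q i * MvPolynomial.X i) = ∑ i, (p i : R) * x i :=
        Finset.sum_congr rfl fun i _ => by rw [map_mul, MvPolynomial.aeval_X, hQ i]
      rw [map_zero, map_add, map_sum, MvPolynomial.aeval_C, hsum, hcp]
    have h0 := hindep this
    have := congrArg MvPolynomial.constantCoeff h0
    simpa using this
  -- positivity of the degrees of the h i
  have hdh : ∀ i, 1 ≤ dh i := by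
    intro i
    by_contra hlt
    have h0 : dh i = 0 := by omega
    have hb0 : φ (h i) ∈ ℬ 0 := h0 ▸ hdegpres (dh i) (h i) (hh i)
    obtain ⟨c, hcex⟩ := hconn _ hb0
    have : MvPolynomial.aeval x ((MvPolynomial.X i : MvPolynomial (Fin k) ℂ))
        = MvPolynomial.aeval x (MvPolynomial.C c) := by
      rw [MvPolynomial.aeval_X, MvPolynomial.aeval_C]
      exact hcex
    have hXC := hindep this
    have := congrArg (MvPolynomial.coeff (Finsupp.single i 1)) hXC
    simp only [MvPolynomial.coeff_X, MvPolynomial.coeff_C] at this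
    rw [if_neg (fun heq : (0 : Fin k →₀ ℕ) = Finsupp.single i 1 => one_ne_zero (Finsupp.single_eq_zero.mp heq.symm))] at this
    simp at this
  -- Koszul syzygies in R
  have hKR : ∀ r : Fin k → R, (∑ i, r i * x i) = 0 →
      ∃ b : Fin k → Fin k → R, (∀ i m, b i m = - b m i) ∧
        ∀ i, r i = ∑ m, b i m * x m := by
    intro r hr
    choose p hp using fun i => hrep (r i)
    set z : Fin l → P := fun j => ∑ i, p i j * ⟨x i, hxmem i⟩ with hzdef
    have hzero : ∀ j, z j = 0 := by
      apply hli'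
      have hterm : ∀ j, z j • φ (t j) = ∑ i, ((p i j : R) * φ (t j)) * x i := by
        intro j
        rw [Subalgebra.smul_def, smul_eq_mul, hzdef]
        push_cast [Finset.sum_mul]
        exact Finset.sum_congr rfl fun i _ => by ring
      calc ∑ j, z j • φ (t j)
          = ∑ j, ∑ i, ((p i j : R) * φ (t j)) * x i :=
            Finset.sum_congr rfl fun j _ => hterm j
        _ = ∑ i, (∑ j, (p i j : R) * φ (t j)) * x i := by
            rw [Finset.sum_comm]
            exact Finset.sum_congr rfl fun i _ => by rw [Finset.sum_mul]
        _ = ∑ i, r i * x i := Finset.sum_congr rfl fun i _ => by rw [hp i]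
        _ = 0 := hr
    choose Q hQ using fun i j => hPrep (p i j)
    have hQ0 : ∀ j, ∑ i, Q i j * MvPolynomial.X i = 0 := by
      intro j
      apply hindep
      rw [map_zero, map_sum]
      have := congrArg (Subtype.val) (hzero j)
      rw [hzdef] at this
      push_cast at this
      rw [← this]
      exact Finset.sum_congr rfl fun i _ => by
        rw [map_mul, MvPolynomial.aeval_X, hQ i j]
    choose q hqa hqe using fun j => isKoszulSeq_X k (fun i => Q i j) (hQ0 j)
    refine ⟨fun i m => ∑ j, MvPolynomial.aeval x (q j i m) * φ (t j), ?_, ?_⟩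
    · intro i m
      rw [← Finset.sum_neg_distrib]
      exact Finset.sum_congr rfl fun j _ => by rw [hqa j i m]; simp
    · intro i
      rw [← hp i]
      calc ∑ j, (p i j : R) * φ (t j)
          = ∑ j, (∑ m, MvPolynomial.aeval x (q j i m) * x m) * φ (t j) := by
            refine Finset.sum_congr rfl fun j _ => ?_
            rw [hQ i j, hqe j i, map_sum]
            congr 1
            exact Finset.sum_congr rfl fun m _ => by rw [map_mul, MvPolynomial.aeval_X]
        _ = ∑ j, ∑ m, (MvPolynomial.aeval x (q j i m) * φ (t j)) * x m := by
            refine Finset.sum_congr rfl fun j _ => ?_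
            rw [Finset.sum_mul]
            exact Finset.sum_congr rfl fun m _ => by ring
        _ = ∑ m, (∑ j, MvPolynomial.aeval x (q j i m) * φ (t j)) * x m := by
            rw [Finset.sum_comm]
            exact Finset.sum_congr rfl fun m _ => by rw [Finset.sum_mul]
  -- H is a homogeneous ideal
  have hHhom : Ideal.IsHomogeneous 𝒜 (Ideal.span (Set.range h)) :=
    Ideal.homogeneous_span 𝒜 _ (by rintro _ ⟨i, rfl⟩; exact ⟨dh i, hh i⟩)
  have hKle : (⨆ e, ⨆ _ : e ≤ d, Submodule.restrictScalars ℂ K ⊓ 𝒜 e)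
      ≤ Submodule.restrictScalars ℂ K :=
    iSup_le fun e => iSup_le fun _ => inf_le_left
  have hHle : (⨆ e, ⨆ _ : e ≤ d,
        Submodule.restrictScalars ℂ (Ideal.span (Set.range h)) ⊓ 𝒜 e)
      ≤ Submodule.restrictScalars ℂ (Ideal.span (Set.range h)) :=
    iSup_le fun e => iSup_le fun _ => inf_le_left
  -- the main induction
  have main : ∀ e, e ≤ d → ∀ f, φ f = 0 → f ∈ 𝒜 e → f ∈ K := by
    intro e
    induction e using Nat.strong_induction_on with
    | _ e IH =>
    intro hed f hf hfe
    have hfm : f ∈ (⨆ e', ⨆ _ : e' ≤ d, 𝒜 e') :=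
      Submodule.mem_iSup_of_mem e (Submodule.mem_iSup_of_mem hed hfe)
    rw [hlow] at hfm
    obtain ⟨u, hu, κ, hκ, hfu⟩ := Submodule.mem_sup.mp hfm
    obtain ⟨s, hs, g, hg, hus⟩ := Submodule.mem_sup.mp hu
    subst hus
    subst hfu
    have hκK : κ ∈ K := hKle hκ
    have hgH : g ∈ Ideal.span (Set.range h) := hHle hg
    have hκker : φ κ = 0 := hK hκK
    -- coefficients of s
    have hs' : s ∈ Submodule.span ℂ (Set.range t) :=
      Submodule.span_mono (by rintro y ⟨j, _, rfl⟩; exact ⟨j, rfl⟩) hs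
    obtain ⟨c, hc⟩ := (Submodule.mem_span_range_iff_exists_fun ℂ).mp hs'
    obtain ⟨A, hA⟩ := Ideal.mem_span_range_iff_exists_fun.mp hgH
    -- the basic relation in R
    have hrel : (∑ j, c j • φ (t j)) + φ g = 0 := by
      have := hf
      rw [map_add, map_add, hκker, add_zero, ← hc, map_sum] at this
      simpa using this
    choose p hp using fun i => hrep (φ (A i))
    -- the coefficients vanish
    set z : Fin l → P := fun j =>
      algebraMap ℂ P (c j) + ∑ i, p i j * ⟨x i, hxmem i⟩ with hzdef
    have hzero : ∀ j, z j = 0 := by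
      apply hli'
      have hterm : ∀ j, z j • φ (t j)
          = c j • φ (t j) + ∑ i, ((p i j : R) * φ (t j)) * x i := by
        intro j
        rw [Subalgebra.smul_def, smul_eq_mul, hzdef]
        push_cast [add_mul, Finset.sum_mul]
        rw [Algebra.smul_def]
        congr 1
        exact Finset.sum_congr rfl fun i _ => by ring
      calc ∑ j, z j • φ (t j)
          = ∑ j, (c j • φ (t j) + ∑ i, ((p i j : R) * φ (t j)) * x i) :=
            Finset.sum_congr rfl fun j _ => hterm j
        _ = (∑ j, c j • φ (t j)) + ∑ j, ∑ i, ((p i j : R) * φ (t j)) * x i := by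
            rw [Finset.sum_add_distrib]
        _ = (∑ j, c j • φ (t j)) + ∑ i, (∑ j, (p i j : R) * φ (t j)) * x i := by
            congr 1
            rw [Finset.sum_comm]
            exact Finset.sum_congr rfl fun i _ => by rw [Finset.sum_mul]
        _ = (∑ j, c j • φ (t j)) + ∑ i, φ (A i) * x i := by
            congr 1
            exact Finset.sum_congr rfl fun i _ => by rw [hp i]
        _ = (∑ j, c j • φ (t j)) + φ g := by
            congr 1
            rw [← hA, map_sum]
            exact Finset.sum_congr rfl fun i _ => by rw [map_mul]
        _ = 0 := hrel
    have hczero : ∀ j, c j = 0 := by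
      intro j
      apply hconst (c j) (fun i => p i j)
      have := congrArg (Subtype.val) (hzero j)
      rw [hzdef] at this
      push_cast at this
      exact this
    have hszero : s = 0 := by
      rw [← hc]
      simp [hczero]
    have hgker : φ g = 0 := by
      have := hrel
      simp [hczero] at this
      exact this
    -- pass to homogeneous components of degree e
    set ge : F := (DirectSum.decompose 𝒜 g e : F) with hgedef
    set κe : F := (DirectSum.decompose 𝒜 κ e : F) with hκedef
    have hsumdec : ge + κe = s + g + κ := by
      have h1 : (DirectSum.decompose 𝒜 (s + g + κ) e : F) = s + g + κ :=
        DirectSum.decompose_of_mem_same 𝒜 hfe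
      rw [hszero, zero_add] at h1 ⊢
      rw [← h1, DirectSum.decompose_add]
      simp
      rfl
    have hκeK : κe ∈ K := hKhom e hκK
    have hgeH : ge ∈ Ideal.span (Set.range h) := hHhom e hgH
    have hgeker : φ ge = 0 := hkerhom g hgker e
    have hge𝒜 : ge ∈ 𝒜 e := SetLike.coe_mem _
    -- Koszul step
    obtain ⟨A', hA'⟩ := Ideal.mem_span_range_iff_exists_fun.mp hgeH
    have hrel' : ∑ i, φ (A' i) * x i = 0 := by
      rw [← hgeker, ← hA', map_sum]
      exact Finset.sum_congr rfl fun i _ => by rw [map_mul]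
    obtain ⟨b, hba, hbe⟩ := hKR (fun i => φ (A' i)) hrel'
    choose B' hB' using fun i m => hsurj (b i m)
    set B : Fin k → Fin k → F := fun i m => (2⁻¹ : ℂ) • (B' i m - B' m i) with hBdef
    have hBa : ∀ i m, B i m = - B m i := by
      intro i m
      rw [hBdef]
      simp only
      rw [← smul_neg, neg_sub]
    have hφB : ∀ i m, φ (B i m) = b i m := by
      intro i m
      rw [hBdef]
      simp only [map_smul, map_sub, hB']
      rw [hba m i, sub_neg_eq_add, ← two_smul ℂ, smul_smul]
      norm_num
    set A2 : Fin k → F := fun i => A' i - ∑ m, B i m * h m with hA2def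
    have hφA2 : ∀ i, φ (A2 i) = 0 := by
      intro i
      rw [hA2def]
      simp only [map_sub, map_sum, map_mul]
      have : ∑ m, φ (B i m) * φ (h m) = ∑ m, b i m * x m :=
        Finset.sum_congr rfl fun m _ => by rw [hφB]
      rw [this, ← hbe i]
      exact sub_self _
    have hA2sum : ∑ i, A2 i * h i = ge := by
      have hT : ∑ i, (∑ m, B i m * h m) * h i = 0 := by
        set T := ∑ i, ∑ m, (B i m * h m) * h i with hTdef
        have hTe : ∑ i, (∑ m, B i m * h m) * h i = T := by
          rw [hTdef]
          exact Finset.sum_congr rfl fun i _ => by rw [Finset.sum_mul]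
        have hTneg : T = -T := by
          conv_lhs => rw [hTdef, Finset.sum_comm]
          rw [← Finset.sum_neg_distrib]
          refine Finset.sum_congr rfl fun i _ => ?_
          rw [← Finset.sum_neg_distrib]
          refine Finset.sum_congr rfl fun m _ => ?_
          rw [hBa m i]
          ring
        have h2 : (2 : ℂ) • T = 0 := by
          rw [two_smul]
          nth_rewrite 2 [hTneg]
          exact add_neg_cancel T
        have : T = 0 := by
          calc T = (2⁻¹ * 2 : ℂ) • T := by norm_num
            _ = (2⁻¹ : ℂ) • ((2 : ℂ) • T) := by rw [mul_smul]
            _ = 0 := by rw [h2, smul_zero]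
        rw [hTe, this]
      rw [hA2def]
      simp only [sub_mul]
      rw [Finset.sum_sub_distrib, hA', hT, sub_zero]
    -- homogeneous components of the coefficients
    set A3 : Fin k → F := fun i =>
      if hdi : dh i ≤ e then (DirectSum.decompose 𝒜 (A2 i) (e - dh i) : F) else 0
      with hA3def
    have hA3K : ∀ i, A3 i ∈ K := by
      intro i
      simp only [hA3def]
      by_cases hdi : dh i ≤ e
      · rw [dif_pos hdi]
        refine IH (e - dh i) (by have := hdh i; omega) (by omega) _
          (hkerhom (A2 i) (hφA2 i) _) (SetLike.coe_mem _)
      · rw [dif_neg hdi]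
        exact K.zero_mem
    have hge' : ∑ i, A3 i * h i = ge := by
      have hterm : ∀ i, A3 i * h i = (DirectSum.decompose 𝒜 (A2 i * h i) e : F) := by
        intro i
        by_cases hdi : dh i ≤ e
        · rw [DirectSum.coe_decompose_mul_of_right_mem_of_le (𝒜 := 𝒜) (hh i) hdi]
          simp only [hA3def]
          rw [dif_pos hdi]
        · rw [DirectSum.coe_decompose_mul_of_right_mem_of_not_le (𝒜 := 𝒜) (hh i) hdi]
          simp only [hA3def]
          rw [dif_neg hdi, zero_mul]
      calc ∑ i, A3 i * h i
          = ∑ i, (DirectSum.decompose 𝒜 (A2 i * h i) e : F) :=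
            Finset.sum_congr rfl fun i _ => hterm i
        _ = (DirectSum.decompose 𝒜 (∑ i, A2 i * h i) e : F) := (hdsA _ _ _).symm
        _ = ge := by rw [hA2sum, DirectSum.decompose_of_mem_same 𝒜 hge𝒜]
    have hgeK : ge ∈ K := by
      rw [← hge']
      exact Ideal.sum_mem K fun i _ => K.mul_mem_right _ (hA3K i)
    rw [← hsumdec]
    exact K.add_mem hgeK hκeK
  -- conclusion
  apply le_antisymm
  · exact iSup_mono fun e => iSup_mono fun he =>
      inf_le_inf_right _ (fun y hy => hK hy)
  · refine iSup_le fun e => iSup_le fun hed => ?_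
    rintro f ⟨hfk, hfe⟩
    have hfK : f ∈ K := main e hed f hfk hfe
    exact Submodule.mem_iSup_of_mem e (Submodule.mem_iSup_of_mem hed ⟨hfK, hfe⟩)


end
end
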